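/- arXiv:2411.04462 — 6 statements merged into one kernel-verified Lean document; each statement's English description precedes it below -/
import Mathlib

section
/- Let A be a finite nonempty set, F : Δ(A) → Δ(A), and N ∈ ℕ. The following are equivalent: (i) there exists g : A^N → Δ(A) such that F arises from N action samples via g; (ii) each component π ↦ F(π)(a') agrees on Δ(A) with a multivariate real polynomial in the variables (π(a))_{a∈A} of total degree at most N all of whose coefficients are nonnegative. -/
open Filter Asymptotics Topology

/-- `π` is a probability distribution on the finite set `A`. -/
def IsDist {A : Type} [Fintype A] (π : A → ℝ) : Prop :=
  (∀ a, 0 ≤ π a) ∧ ∑ a, π a = 1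

/-- The point mass at `a`. -/
def unitMass {A : Type} [DecidableEq A] (a : A) : A → ℝ :=
  fun a' => if a' = a then 1 else 0

/-- The distribution `E[g(A_1,…,A_N)]` for `A_1,…,A_N` i.i.d. with law `μ`. -/
noncomputable def sampleExp {A : Type} [Fintype A] (N : ℕ)
    (g : (Fin N → A) → A → ℝ) (μ : A → ℝ) : A → ℝ :=
  ∑ v : Fin N → A, (∏ k, μ (v k)) • g v

/-!
A sampling rule `g` yields the polynomial `∑ᵥ g(v)(a') ∏ₖ X_{v k}`, homogeneous of degree `N`
with nonnegative coefficients. Conversely, multiply the degree-`i` homogeneous component of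
`p_{a'}` by `(∑ₐ Xₐ)^(N - i)`: this gives polynomials `q_{a'}`, homogeneous of degree `N` with
nonnegative coefficients, with the same values on the simplex. Since `∑_{a'} q_{a'}` and
`(∑ₐ Xₐ)^N` are homogeneous of degree `N` and agree on the simplex, they agree on the positive
orthant, hence are equal. Then `g(v)(a') = coeff_v q_{a'} / coeff_v (∑ₐ Xₐ)^N`, with `coeff_v`
the coefficient of the monomial `∏ₖ X_{v k}`, is a probability distribution in `a'` and
reproduces each `q_{a'}`.
-/

namespace MvPolynomial

open Finset

section NonnegCoeffs

variable (σ R : Type*) [CommSemiring R] [PartialOrder R] [IsOrderedRing R]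

def nonnegCoeffs : Subsemiring (MvPolynomial σ R) where
  carrier := {p | ∀ m, 0 ≤ p.coeff m}
  zero_mem' _ := by simp
  one_mem' m := by
    classical
    rw [coeff_one]
    split_ifs <;> simp
  add_mem' hp hq m := by
    rw [coeff_add]
    exact add_nonneg (hp m) (hq m)
  mul_mem' hp hq m := by
    classical
    rw [coeff_mul]
    exact sum_nonneg fun x _ => mul_nonneg (hp x.1) (hq x.2)

variable {σ R}

theorem C_mem_nonnegCoeffs {c : R} (hc : 0 ≤ c) : C c ∈ nonnegCoeffs σ R := by
  classical
  intro m
  rw [coeff_C]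
  split_ifs
  exacts [hc, le_rfl]

theorem X_mem_nonnegCoeffs (i : σ) : X i ∈ nonnegCoeffs σ R := by
  classical
  intro m
  rw [coeff_X]
  split_ifs <;> simp

theorem homogeneousComponent_mem_nonnegCoeffs {p : MvPolynomial σ R} (hp : p ∈ nonnegCoeffs σ R)
    (n : ℕ) : homogeneousComponent n p ∈ nonnegCoeffs σ R := by
  intro m
  rw [coeff_homogeneousComponent]
  split_ifs
  exacts [hp m, le_rfl]

end NonnegCoeffs

theorem IsHomogeneous.eval_smul {σ R : Type*} [CommSemiring R] {φ : MvPolynomial σ R} {n : ℕ}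
    (hφ : φ.IsHomogeneous n) (c : R) (x : σ → R) : eval (c • x) φ = c ^ n * eval x φ := by
  rw [eval_eq, eval_eq, mul_sum]
  refine sum_congr rfl fun d hd => ?_
  simp only [Pi.smul_apply, smul_eq_mul, mul_pow, prod_mul_distrib, prod_pow_eq_pow_sum,
    ← hφ.degree_eq_sum_deg_support hd]
  ring

theorem eq_zero_of_eval_pos {σ R : Type*} [Finite σ] [CommRing R] [LinearOrder R]
    [IsStrictOrderedRing R] (φ : MvPolynomial σ R)
    (h : ∀ x : σ → R, (∀ i, 0 < x i) → eval x φ = 0) : φ = 0 := by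
  let succCast : ℕ ↪ R := ⟨fun k => k + 1, fun a b hab => by simpa using hab⟩
  refine eq_zero_of_eval_zero_at_prod_finset φ (fun i => (range (φ.degreeOf i + 1)).map succCast)
    (fun i => by simp) fun x hx => h x fun i => ?_
  obtain ⟨k, -, hk⟩ := mem_map.mp (hx i)
  rw [← hk]
  exact Nat.cast_add_one_pos k

theorem IsHomogeneous.eq_of_eval_simplex {σ 𝕜 : Type*} [Fintype σ] [Nonempty σ] [Field 𝕜]
    [LinearOrder 𝕜] [IsStrictOrderedRing 𝕜] {φ ψ : MvPolynomial σ 𝕜} {n : ℕ}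
    (hφ : φ.IsHomogeneous n) (hψ : ψ.IsHomogeneous n)
    (h : ∀ π : σ → 𝕜, (∀ i, 0 < π i) → ∑ i, π i = 1 → eval π φ = eval π ψ) : φ = ψ := by
  refine sub_eq_zero.mp (eq_zero_of_eval_pos _ fun x hx => ?_)
  set s := ∑ i, x i
  have hs : 0 < s := sum_pos (fun i _ => hx i) univ_nonempty
  have hx_eq : x = s • s⁻¹ • x := by rw [smul_smul, mul_inv_cancel₀ hs.ne', one_smul]
  rw [hx_eq, (hφ.sub hψ).eval_smul, map_sub,
    h _ (fun i => by simpa using mul_pos (inv_pos.mpr hs) (hx i)), sub_self, mul_zero]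
  simp [← mul_sum, inv_mul_cancel₀ hs.ne', s]

section Homogenize

variable {σ R : Type*} [Fintype σ] [CommSemiring R]

theorem isHomogeneous_sum_X_pow (N : ℕ) :
    ((∑ j, X j : MvPolynomial σ R) ^ N).IsHomogeneous N := by
  simpa using (IsHomogeneous.sum _ _ 1 fun j _ => isHomogeneous_X R j).pow N

noncomputable def homogenizeWithSum (N : ℕ) (p : MvPolynomial σ R) : MvPolynomial σ R :=
  ∑ i ∈ range (N + 1), homogeneousComponent i p * (∑ j, X j) ^ (N - i)

theorem isHomogeneous_homogenizeWithSum (N : ℕ) (p : MvPolynomial σ R) :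
    (homogenizeWithSum N p).IsHomogeneous N := by
  refine IsHomogeneous.sum _ _ N fun i hi => ?_
  convert (homogeneousComponent_isHomogeneous i p).mul (isHomogeneous_sum_X_pow (N - i)) using 1
  have := mem_range.mp hi
  omega

theorem eval_homogenizeWithSum {N : ℕ} {p : MvPolynomial σ R} (hp : p.totalDegree ≤ N)
    {x : σ → R} (hx : ∑ j, x j = 1) : eval x (homogenizeWithSum N p) = eval x p := by
  have hcomponents : ∑ i ∈ range (N + 1), homogeneousComponent i p = p := by
    rw [← sum_subset (range_subset_range.mpr (Nat.succ_le_succ hp)) fun i hi hi' =>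
      homogeneousComponent_eq_zero i p (by rw [mem_range, not_lt] at hi'; omega), sum_homogeneousComponent]
  conv_rhs => rw [← hcomponents]
  simp [homogenizeWithSum, hx]

theorem homogenizeWithSum_mem_nonnegCoeffs [PartialOrder R] [IsOrderedRing R] (N : ℕ)
    {p : MvPolynomial σ R} (hp : p ∈ nonnegCoeffs σ R) :
    homogenizeWithSum N p ∈ nonnegCoeffs σ R :=
  sum_mem fun i _ => mul_mem (homogeneousComponent_mem_nonnegCoeffs hp i)
    (pow_mem (sum_mem fun j _ => X_mem_nonnegCoeffs j) _)

end Homogenize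

section SamplePolynomial

variable {σ R : Type*} [CommSemiring R] {N : ℕ}

noncomputable def tupleCount (v : Fin N → σ) : σ →₀ ℕ :=
  ∑ k, Finsupp.single (v k) 1

theorem prod_X_eq_monomial_tupleCount (v : Fin N → σ) :
    ∏ k, (X (v k) : MvPolynomial σ R) = monomial (tupleCount v) 1 := by
  rw [tupleCount, monomial_sum_one]
  rfl

variable [Fintype σ]

noncomputable def samplePolynomial (g : (Fin N → σ) → R) : MvPolynomial σ R :=
  ∑ v, C (g v) * ∏ k, X (v k)

theorem eval_samplePolynomial (g : (Fin N → σ) → R) (x : σ → R) :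
    eval x (samplePolynomial g) = ∑ v, g v * ∏ k, x (v k) := by
  simp [samplePolynomial]

theorem coeff_samplePolynomial [DecidableEq σ] (g : (Fin N → σ) → R) (m : σ →₀ ℕ) :
    coeff m (samplePolynomial g) = ∑ v with tupleCount v = m, g v := by
  simp [samplePolynomial, coeff_sum, prod_X_eq_monomial_tupleCount, coeff_monomial, sum_filter]

theorem isHomogeneous_samplePolynomial (g : (Fin N → σ) → R) :
    (samplePolynomial g).IsHomogeneous N :=
  IsHomogeneous.sum _ _ _ fun v _ => by
    simpa using (IsHomogeneous.prod univ (fun k => X (v k)) (fun _ => 1) fun k _ =>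
      isHomogeneous_X R (v k)).C_mul (g v)

theorem samplePolynomial_mem_nonnegCoeffs [PartialOrder R] [IsOrderedRing R]
    {g : (Fin N → σ) → R} (hg : ∀ v, 0 ≤ g v) : samplePolynomial g ∈ nonnegCoeffs σ R :=
  sum_mem fun v _ => mul_mem (C_mem_nonnegCoeffs (hg v)) (prod_mem fun _ _ => X_mem_nonnegCoeffs _)

theorem sum_X_pow_eq_samplePolynomial_one :
    (∑ j, X j : MvPolynomial σ R) ^ N = samplePolynomial (N := N) fun _ => 1 := by
  simp [samplePolynomial, Fintype.sum_pow]

end SamplePolynomial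

theorem exists_isDist_samplePolynomial_eq {σ ι : Type} [Fintype σ] [Fintype ι] {N : ℕ}
    {q : ι → MvPolynomial σ ℝ} (hq : ∀ i, q i ∈ nonnegCoeffs σ ℝ)
    (hsum : ∑ i, q i = (∑ j, X j) ^ N) :
    ∃ g : (Fin N → σ) → ι → ℝ, (∀ v, IsDist (g v)) ∧ ∀ i, q i = samplePolynomial fun v => g v i := by
  classical
  set S := (∑ j, X j : MvPolynomial σ ℝ) ^ N
  have hS : ∀ m, coeff m S = #{v : Fin N → σ | tupleCount v = m} := by
    simp [S, sum_X_pow_eq_samplePolynomial_one, coeff_samplePolynomial]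
  have hle : ∀ i m, coeff m (q i) ≤ coeff m S := fun i m => by
    rw [← hsum, coeff_sum]
    exact single_le_sum (fun i _ => hq i m) (mem_univ i)
  refine ⟨fun v i => coeff (tupleCount v) (q i) / coeff (tupleCount v) S, fun v => ⟨fun i =>
    div_nonneg (hq i _) (hS _ ▸ Nat.cast_nonneg _), ?_⟩, fun i => ?_⟩
  · have hpos : 0 < coeff (tupleCount v) S := by
      rw [hS]
      exact_mod_cast card_pos.mpr ⟨v, by simp⟩
    rw [← sum_div, ← coeff_sum, hsum, div_self hpos.ne']
  · ext m
    rw [coeff_samplePolynomial, sum_congr rfl fun v hv => show coeff (tupleCount v) (q i) /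
      coeff (tupleCount v) S = coeff m (q i) / coeff m S by rw [(mem_filter.mp hv).2],
      sum_const, nsmul_eq_mul, ← hS]
    rcases eq_or_ne (coeff m S) 0 with h0 | h0
    · simp [h0, le_antisymm (h0 ▸ hle i m) (hq i m)]
    · field_simp

end MvPolynomial

open MvPolynomial

theorem sampleExp_apply_eq_eval {A : Type} [Fintype A] (N : ℕ) (g : (Fin N → A) → A → ℝ)
    (π : A → ℝ) (a' : A) : sampleExp N g π a' = eval π (samplePolynomial fun v => g v a') := by
  simp [sampleExp, Finset.sum_apply, eval_samplePolynomial, mul_comm]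

/-- Proposition: sample representation iff nonnegative polynomial.
For `F : Δ(A) → Δ(A)` and `N ∈ ℕ`, the following are equivalent:
(i) there exists `g : A^N → Δ(A)` such that `F` arises from `N` action samples via `g`;
(ii) each component of `F` agrees on `Δ(A)` with a real multivariate polynomial of total
degree at most `N` all of whose coefficients are nonnegative. -/
theorem stmt4 {A : Type} [Fintype A] [Nonempty A] (F : (A → ℝ) → A → ℝ)
    (hF : ∀ π, IsDist π → IsDist (F π)) (N : ℕ) :
    (∃ g : (Fin N → A) → A → ℝ, (∀ v, IsDist (g v)) ∧
      ∀ π : A → ℝ, IsDist π → F π = sampleExp N g π) ↔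
    (∀ a' : A, ∃ p : MvPolynomial A ℝ, p.totalDegree ≤ N ∧
      (∀ m : A →₀ ℕ, 0 ≤ p.coeff m) ∧
      ∀ π : A → ℝ, IsDist π → F π a' = MvPolynomial.eval π p) := by
  constructor
  · rintro ⟨g, hg, hrep⟩ a'
    exact ⟨samplePolynomial fun v => g v a', (isHomogeneous_samplePolynomial _).totalDegree_le,
      samplePolynomial_mem_nonnegCoeffs fun v => (hg v).1 a',
      fun π hπ => by rw [hrep π hπ, sampleExp_apply_eq_eval]⟩
  · intro h
    choose p hdeg hnonneg heval using h
    have hq_eval : ∀ a' π, IsDist π → eval π (homogenizeWithSum N (p a')) = F π a' :=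
      fun a' π hπ => by rw [eval_homogenizeWithSum (hdeg a') hπ.2, heval a' π hπ]
    have hsum : ∑ a', homogenizeWithSum N (p a') = (∑ a, X a) ^ N := by
      refine IsHomogeneous.eq_of_eval_simplex
        (IsHomogeneous.sum _ _ N fun a' _ => isHomogeneous_homogenizeWithSum N (p a'))
        (isHomogeneous_sum_X_pow N) fun π hpos hπ => ?_
      have hdist : IsDist π := ⟨fun a => (hpos a).le, hπ⟩
      simp only [map_sum, map_pow, eval_X, hq_eval _ _ hdist, (hF π hdist).2, hπ, one_pow]
    obtain ⟨g, hg, hqg⟩ := exists_isDist_samplePolynomial_eq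
      (fun a' => homogenizeWithSum_mem_nonnegCoeffs N (hnonneg a')) hsum
    refine ⟨g, hg, fun π hπ => funext fun a' => ?_⟩
    rw [sampleExp_apply_eq_eval, ← hqg, hq_eval a' π hπ]
end

section
/- Let A be a finite nonempty set and F : Δ(A) → Δ(A) a polynomial with no zeros on the simplex, i.e. F(π)(a') ≠ 0 for every π ∈ Δ(A) and every a' ∈ A. Then there exist N ∈ ℕ and g : A^N → Δ(A) such that F arises from N action samples via g. -/
open Filter Asymptotics Topology

/-!
On the simplex, each component of `F` is the i.i.d. mean `E h(A₁, …, A_d)` of a real kernel `h`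
on words of length `d` (monomials are products of coordinates, and `∑ a, π a = 1` pads every
monomial to degree `d`); shifting by a multiple of `1 - ∑ h` makes the kernels sum to `1` over the
output letter without changing their means. The U-statistic of `h` on `N ≥ d` samples, the average
of `h` over injectively chosen subwords, has the same mean. Averaging over all choices instead gives
the mean of `h` under the empirical distribution of the sample, which is at least the minimum
`ε > 0` of `F` on the simplex; since the non-injective choices form a vanishing fraction
`1 - N.descFactorial d / N ^ d`, the U-statistics are positive for large `N`.
-/

open Finset

section IidMean

variable {A : Type} [Fintype A]

noncomputable def iidMean (ι : Type) [Fintype ι] [DecidableEq ι] (π : A → ℝ) :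
    ((ι → A) → ℝ) →ₗ[ℝ] ℝ where
  toFun h := ∑ w, (∏ i, π (w i)) * h w
  map_add' _ _ := by simp only [Pi.add_apply, mul_add, sum_add_distrib]
  map_smul' _ _ := by
    simp only [Pi.smul_apply, smul_eq_mul, RingHom.id_apply, mul_sum, mul_left_comm]

variable {ι κ : Type} [Fintype ι] [DecidableEq ι] [Fintype κ] [DecidableEq κ] {π : A → ℝ}

lemma iidMean_apply (h : (ι → A) → ℝ) : iidMean ι π h = ∑ w, (∏ i, π (w i)) * h w := rfl

lemma sampleExp_apply (N : ℕ) (g : (Fin N → A) → A → ℝ) (a : A) :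
    sampleExp N g π a = iidMean (Fin N) π (fun w => g w a) := by
  simp [sampleExp, iidMean_apply]

lemma iidMean_one (hπ : ∑ a, π a = 1) : iidMean ι π 1 = 1 := by
  simp [iidMean_apply, ← Fintype.prod_sum, hπ]

lemma iidMean_comp_equiv (e : ι ≃ κ) (h : (ι → A) → ℝ) :
    iidMean κ π (fun w => h (w ∘ e)) = iidMean ι π h := by
  rw [iidMean_apply, iidMean_apply, ← (e.arrowCongr (Equiv.refl A)).symm.sum_comp]
  refine sum_congr rfl fun v _ => ?_
  simp [Equiv.arrowCongr, ← e.prod_comp]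

lemma iidMean_sumElim (f : (ι → A) → ℝ) (g : (κ → A) → ℝ) :
    iidMean (ι ⊕ κ) π (fun w => f (w ∘ Sum.inl) * g (w ∘ Sum.inr)) =
      iidMean ι π f * iidMean κ π g := by
  rw [iidMean_apply, ← (Equiv.sumArrowEquivProdArrow ι κ A).symm.sum_comp,
    Fintype.sum_prod_type, iidMean_apply, iidMean_apply, sum_mul_sum]
  refine sum_congr rfl fun u _ => sum_congr rfl fun v _ => ?_
  simp [Equiv.sumArrowEquivProdArrow, Fintype.prod_sum_type]
  ring

lemma iidMean_comp_embedding (hπ : ∑ a, π a = 1) (j : ι ↪ κ) (h : (ι → A) → ℝ) :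
    iidMean κ π (fun w => h (w ∘ j)) = iidMean ι π h := by
  classical
  let e : ι ⊕ {k // k ∉ Set.range j} ≃ κ :=
    (Equiv.sumCongr (Equiv.ofInjective j j.injective) (Equiv.refl _)).trans
      (Equiv.sumCompl (· ∈ Set.range j))
  have he : ∀ i, e.symm (j i) = Sum.inl i := fun i => e.symm_apply_eq.2 rfl
  rw [← iidMean_comp_equiv e.symm]
  have := iidMean_sumElim (π := π) h (1 : ({k // k ∉ Set.range j} → A) → ℝ)
  rw [iidMean_one hπ, mul_one] at this
  convert this using 3 with w
  simp [Function.comp_def, he]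

end IidMean

section IidMeanSpace

variable (A : Type) [Fintype A]

noncomputable def iidMeanSpace (d : ℕ) : Submodule ℝ ((A → ℝ) → ℝ) where
  carrier := {f | ∃ h : (Fin d → A) → ℝ, ∀ π, ∑ a, π a = 1 → f π = iidMean (Fin d) π h}
  add_mem' := by
    rintro f g ⟨h, hf⟩ ⟨h', hg⟩
    exact ⟨h + h', fun π hπ => by simp [hf π hπ, hg π hπ]⟩
  zero_mem' := ⟨0, by simp⟩
  smul_mem' := by
    rintro c f ⟨h, hf⟩
    exact ⟨c • h, fun π hπ => by simp [hf π hπ]⟩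

variable {A}

lemma apply_mem_iidMeanSpace_one (a : A) : (fun π => π a) ∈ iidMeanSpace A 1 := by
  classical
  refine ⟨fun v => if v 0 = a then 1 else 0, fun π _ => ?_⟩
  rw [iidMean_apply, ← (Equiv.funUnique (Fin 1) A).symm.sum_comp]
  simp

lemma one_mem_iidMeanSpace (d : ℕ) : 1 ∈ iidMeanSpace A d :=
  ⟨1, fun _ hπ => (iidMean_one hπ).symm⟩

lemma mul_mem_iidMeanSpace {d e : ℕ} {f g : (A → ℝ) → ℝ} (hf : f ∈ iidMeanSpace A d)
    (hg : g ∈ iidMeanSpace A e) : f * g ∈ iidMeanSpace A (d + e) := by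
  obtain ⟨h, hf⟩ := hf
  obtain ⟨h', hg⟩ := hg
  refine ⟨fun w => h (w ∘ Fin.castAdd e) * h' (w ∘ Fin.natAdd d), fun π hπ => ?_⟩
  rw [Pi.mul_apply, hf π hπ, hg π hπ, ← iidMean_sumElim,
    ← iidMean_comp_equiv finSumFinEquiv.symm]
  simp [Function.comp_def]

lemma iidMeanSpace_mono {d e : ℕ} (hde : d ≤ e) : iidMeanSpace A d ≤ iidMeanSpace A e := by
  obtain ⟨k, rfl⟩ := Nat.exists_eq_add_of_le hde
  intro f hf
  simpa using mul_mem_iidMeanSpace hf (one_mem_iidMeanSpace k)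

lemma pow_mem_iidMeanSpace {d : ℕ} {f : (A → ℝ) → ℝ} (hf : f ∈ iidMeanSpace A d) (n : ℕ) :
    f ^ n ∈ iidMeanSpace A (d * n) := by
  induction n with
  | zero => simpa using one_mem_iidMeanSpace 0
  | succ n ih => rw [pow_succ]; exact mul_mem_iidMeanSpace ih hf

lemma prod_mem_iidMeanSpace {ι : Type} (s : Finset ι) {d : ι → ℕ} {f : ι → (A → ℝ) → ℝ}
    (hf : ∀ i ∈ s, f i ∈ iidMeanSpace A (d i)) :
    ∏ i ∈ s, f i ∈ iidMeanSpace A (∑ i ∈ s, d i) := by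
  classical
  induction s using Finset.induction_on with
  | empty => simpa using one_mem_iidMeanSpace 0
  | insert i s hi ih =>
    rw [prod_insert hi, sum_insert hi]
    exact mul_mem_iidMeanSpace (hf i (mem_insert_self i s))
      (ih fun j hj => hf j (mem_insert_of_mem hj))

lemma eval_mem_iidMeanSpace {d : ℕ} {p : MvPolynomial A ℝ} (hp : p.totalDegree ≤ d) :
    (fun π => MvPolynomial.eval π p) ∈ iidMeanSpace A d := by
  have hmonomial : ∀ β ∈ p.support,
      (fun π : A → ℝ => ∏ a, π a ^ β a) ∈ iidMeanSpace A (∑ a, β a) := by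
    intro β _
    convert prod_mem_iidMeanSpace univ fun a _ =>
      pow_mem_iidMeanSpace (apply_mem_iidMeanSpace_one a) (β a) using 2 <;> simp
  have hfun : (fun π => MvPolynomial.eval π p) =
      ∑ β ∈ p.support, p.coeff β • fun π : A → ℝ => ∏ a, π a ^ β a := by
    ext π; simp [MvPolynomial.eval_eq']
  rw [hfun]
  refine Submodule.sum_mem _ fun β hβ => Submodule.smul_mem _ _ ?_
  refine iidMeanSpace_mono ?_ (hmonomial β hβ)
  simpa [Finsupp.sum_fintype] using (MvPolynomial.le_totalDegree hβ).trans hp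

end IidMeanSpace

section DistMap

variable {A B : Type} [Fintype A] [DecidableEq A] [Fintype B]

def distMap (f : B → A) (ρ : B → ℝ) (a : A) : ℝ := ∑ b with f b = a, ρ b

lemma IsDist.distMap {ρ : B → ℝ} (hρ : IsDist ρ) (f : B → A) : IsDist (distMap f ρ) :=
  ⟨fun _ => sum_nonneg fun b _ => hρ.1 b, by rw [← hρ.2]; exact sum_fiberwise univ f ρ⟩

lemma iidMean_distMap {ι : Type} [Fintype ι] [DecidableEq ι] (f : B → A) (ρ : B → ℝ)
    (h : (ι → A) → ℝ) : iidMean ι (distMap f ρ) h = iidMean ι ρ (fun u => h (f ∘ u)) := by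
  have hfiber : ∀ v : ι → A, ∏ i, distMap f ρ (v i) = ∑ u with f ∘ u = v, ∏ i, ρ (u i) := by
    intro v
    simp only [distMap]
    rw [prod_univ_sum]
    congr 1
    ext u
    simp [Fintype.mem_piFinset, funext_iff]
  simp_rw [iidMean_apply, hfiber, sum_mul]
  rw [← sum_fiberwise univ (fun u : ι → B => f ∘ u)]
  exact sum_congr rfl fun v _ => sum_congr rfl fun u hu => by rw [(mem_filter.1 hu).2]

end DistMap

section UStatistic

variable {A : Type} {ι κ : Type} [Fintype ι] [Fintype κ]

lemma abs_sum_embedding_sub_sum_le [DecidableEq ι] (F : (ι → κ) → ℝ) {M : ℝ}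
    (hM : ∀ j, |F j| ≤ M) :
    |∑ e : ι ↪ κ, F e - ∑ j, F j| ≤ (Fintype.card (ι → κ) - Fintype.card (ι ↪ κ)) * M := by
  classical
  have hemb : ∑ e : ι ↪ κ, F e = ∑ j : {j : ι → κ // Function.Injective j}, F j :=
    ((Equiv.subtypeInjectiveEquivEmbedding ι κ).sum_comp (F ∘ (⇑))).symm
  have hcard : (Fintype.card {j : ι → κ // ¬Function.Injective j} : ℝ) =
      Fintype.card (ι → κ) - Fintype.card (ι ↪ κ) := by
    rw [Fintype.card_subtype_compl, Nat.cast_sub (Fintype.card_subtype_le _),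
      Fintype.card_congr (Equiv.subtypeInjectiveEquivEmbedding ι κ)]
  rw [hemb, ← Fintype.sum_subtype_add_sum_subtype Function.Injective F, sub_add_cancel_left,
    abs_neg, ← hcard]
  calc |∑ j : {j : ι → κ // ¬Function.Injective j}, F j|
      ≤ ∑ j : {j : ι → κ // ¬Function.Injective j}, |F j| := abs_sum_le_sum_abs _ _
    _ ≤ ∑ _j : {j : ι → κ // ¬Function.Injective j}, M := sum_le_sum fun j _ => hM j
    _ = _ := by rw [sum_const, card_univ, nsmul_eq_mul]

noncomputable def uStatistic (h : (ι → A) → ℝ) (w : κ → A) : ℝ :=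
  (∑ j : ι ↪ κ, h (w ∘ j)) / Fintype.card (ι ↪ κ)

lemma iidMean_uStatistic [Fintype A] [DecidableEq ι] [DecidableEq κ] [Nonempty (ι ↪ κ)]
    {π : A → ℝ} (hπ : ∑ a, π a = 1) (h : (ι → A) → ℝ) :
    iidMean κ π (uStatistic h) = iidMean ι π h := by
  have hu : (uStatistic h : (κ → A) → ℝ) =
      (Fintype.card (ι ↪ κ) : ℝ)⁻¹ • ∑ j : ι ↪ κ, fun w => h (w ∘ j) := by
    ext w; simp [uStatistic, div_eq_inv_mul]
  have hcard : (Fintype.card (ι ↪ κ) : ℝ) ≠ 0 := Nat.cast_ne_zero.2 Fintype.card_ne_zero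
  simp only [hu, map_smul, map_sum, iidMean_comp_embedding hπ, sum_const, card_univ,
    nsmul_eq_mul, smul_eq_mul, inv_mul_cancel_left₀ hcard]

lemma sum_uStatistic_eq_one {B : Type} [Fintype B] [Nonempty (ι ↪ κ)] {h : B → (ι → A) → ℝ}
    (hh : ∀ v, ∑ b, h b v = 1) (w : κ → A) : ∑ b, uStatistic (h b) w = 1 := by
  have hcard : (Fintype.card (ι ↪ κ) : ℝ) ≠ 0 := Nat.cast_ne_zero.2 Fintype.card_ne_zero
  simp only [uStatistic, ← sum_div]
  rw [sum_comm]
  simp only [hh, sum_const, card_univ, nsmul_eq_mul, mul_one, div_self hcard]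

lemma abs_card_mul_uStatistic_sub_le [Fintype A] [DecidableEq A] [DecidableEq ι] [Nonempty κ]
    (h : (ι → A) → ℝ) {M : ℝ} (hM : ∀ v, |h v| ≤ M) (w : κ → A) :
    |Fintype.card (ι ↪ κ) * uStatistic h w -
        Fintype.card (ι → κ) * iidMean ι (distMap w fun _ => (Fintype.card κ : ℝ)⁻¹) h| ≤
      (Fintype.card (ι → κ) - Fintype.card (ι ↪ κ)) * M := by
  have hκ : (Fintype.card κ : ℝ) ≠ 0 := Nat.cast_ne_zero.2 Fintype.card_ne_zero
  have hu : Fintype.card (ι ↪ κ) * uStatistic h w = ∑ e : ι ↪ κ, h (w ∘ e) := by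
    rcases isEmpty_or_nonempty (ι ↪ κ) with _ | _
    · simp
    · exact mul_div_cancel₀ _ (Nat.cast_ne_zero.2 Fintype.card_ne_zero)
  have hall : Fintype.card (ι → κ) * iidMean ι (distMap w fun _ => (Fintype.card κ : ℝ)⁻¹) h =
      ∑ j : ι → κ, h (w ∘ j) := by
    rw [iidMean_distMap, iidMean_apply, mul_sum]
    refine sum_congr rfl fun j _ => ?_
    simp [hκ]
  rw [hu, hall]
  exact abs_sum_embedding_sub_sum_le (fun j => h (w ∘ j)) fun j => hM _

lemma tendsto_descFactorial_div_pow (d : ℕ) :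
    Tendsto (fun N : ℕ => (N.descFactorial d : ℝ) / N ^ d) atTop (𝓝 1) := by
  have hprod : (fun N : ℕ => ∏ i ∈ range d, (1 - (i : ℝ) / N)) =ᶠ[atTop]
      fun N : ℕ => (N.descFactorial d : ℝ) / N ^ d := by
    filter_upwards [eventually_ge_atTop d, eventually_gt_atTop 0] with N hdN hN
    rw [Nat.descFactorial_eq_prod_range, Nat.cast_prod, pow_eq_prod_const, ← prod_div_distrib]
    refine prod_congr rfl fun i hi => ?_
    rw [Nat.cast_sub (by linarith [mem_range.1 hi])]
    field_simp
  refine Tendsto.congr' hprod ?_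
  simpa using tendsto_finsetProd (range d) fun i _ =>
    (tendsto_const_nhds (x := (1 : ℝ))).sub (tendsto_const_div_atTop_nhds_zero_nat (i : ℝ))

end UStatistic

lemma eventually_uStatistic_pos {A : Type} [Fintype A] {d : ℕ} (h : (Fin d → A) → ℝ)
    (hpos : ∀ π, IsDist π → 0 < iidMean (Fin d) π h) :
    ∀ᶠ N in atTop, ∀ w : Fin N → A, 0 < uStatistic h w := by
  classical
  have hcont : Continuous fun π : A → ℝ => iidMean (Fin d) π h := by
    simp only [iidMean_apply]; fun_prop
  obtain ⟨ε, hε, hεle⟩ := (isCompact_stdSimplex ℝ A).exists_forall_le' hcont.continuousOn hpos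
  set M := ∑ v, |h v|
  have hM : ∀ v, |h v| ≤ M := fun v => single_le_sum (fun v _ => abs_nonneg (h v)) (mem_univ v)
  have hlim := tendsto_descFactorial_div_pow d
  have hsmall : ∀ᶠ N : ℕ in atTop,
      (1 - N.descFactorial d / N ^ d) * M < N.descFactorial d / N ^ d * ε :=
    ((hlim.const_sub 1).mul_const M).eventually_lt (hlim.mul_const ε) (by simpa using hε)
  filter_upwards [eventually_ge_atTop (d + 1), hsmall] with N hdN hNsmall w
  have : Nonempty (Fin N) := ⟨⟨0, by omega⟩⟩
  have hN : (0 : ℝ) < N := by exact_mod_cast (by omega : 0 < N)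
  have hunif : IsDist fun _ : Fin N => (Fintype.card (Fin N) : ℝ)⁻¹ :=
    ⟨fun _ => by positivity, by simp [hN.ne']⟩
  have hmean := hεle _ (hunif.distMap w)
  have key := abs_card_mul_uStatistic_sub_le h hM w
  simp only [Fintype.card_fin, Fintype.card_fun, Fintype.card_embedding_eq] at key hmean
  push_cast at key
  have hT : (0 : ℝ) < N ^ d := by positivity
  have hc : (0 : ℝ) < N.descFactorial d := by
    exact_mod_cast Nat.pos_of_ne_zero (by rw [Ne, Nat.descFactorial_eq_zero_iff_lt]; omega)
  have hcT : (N.descFactorial d : ℝ) ≤ N ^ d := by exact_mod_cast Nat.descFactorial_le_pow N d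
  have hNsmall' : (N ^ d - N.descFactorial d) * M < N.descFactorial d * ε := by
    field_simp at hNsmall; linarith
  have := (abs_le.1 key).1
  refine pos_of_mul_pos_right (a := (N.descFactorial d : ℝ)) ?_ hc.le
  nlinarith [mul_le_mul_of_nonneg_left hmean hT.le]

lemma exists_sum_eq_one_of_sum_iidMean_eq_one {A B ι : Type} [Fintype A] [Fintype B]
    [Nonempty B] [Fintype ι] [DecidableEq ι] (h : B → (ι → A) → ℝ)
    (hsum : ∀ π, IsDist π → ∑ b, iidMean ι π (h b) = 1) :
    ∃ h' : B → (ι → A) → ℝ, (∀ v, ∑ b, h' b v = 1) ∧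
      ∀ π, IsDist π → ∀ b, iidMean ι π (h' b) = iidMean ι π (h b) := by
  have hB : (Fintype.card B : ℝ) ≠ 0 := Nat.cast_ne_zero.2 Fintype.card_ne_zero
  refine ⟨fun b => h b + (Fintype.card B : ℝ)⁻¹ • (1 - ∑ b', h b'), fun v => ?_,
    fun π hπ b => ?_⟩
  · simp [sum_add_distrib, hB]
  · simp [map_sub, map_sum, iidMean_one hπ.2, hsum π hπ]

/-- Corollary: polynomials with no zeros on the simplex arise from
action samples. If `F : Δ(A) → Δ(A)` is a polynomial (each component agrees on `Δ(A)`
with a real multivariate polynomial) with no zeros on the simplex, then there exist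
`N ∈ ℕ` and `g : A^N → Δ(A)` such that `F` arises from `N` action samples via `g`. -/
theorem stmt5 {A : Type} [Fintype A] [Nonempty A] (F : (A → ℝ) → A → ℝ)
    (hF : ∀ π, IsDist π → IsDist (F π))
    (hpoly : ∀ a' : A, ∃ p : MvPolynomial A ℝ,
      ∀ π : A → ℝ, IsDist π → F π a' = MvPolynomial.eval π p)
    (hnz : ∀ π : A → ℝ, IsDist π → ∀ a' : A, F π a' ≠ 0) :
    ∃ (N : ℕ) (g : (Fin N → A) → A → ℝ), (∀ v, IsDist (g v)) ∧
      ∀ π : A → ℝ, IsDist π → F π = sampleExp N g π := by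
  choose p hp using hpoly
  set d := univ.sup fun a => (p a).totalDegree
  choose h hh using fun a => eval_mem_iidMeanSpace (le_sup (f := fun a => (p a).totalDegree)
    (mem_univ a))
  have hF_eq : ∀ π, IsDist π → ∀ a, F π a = iidMean (Fin d) π (h a) := fun π hπ a =>
    (hp a π hπ).trans (hh a π hπ.2)
  obtain ⟨h', hsum, hmean⟩ := exists_sum_eq_one_of_sum_iidMean_eq_one h fun π hπ => by
    rw [← (hF π hπ).2]; exact sum_congr rfl fun a _ => (hF_eq π hπ a).symm
  have hpos : ∀ a π, IsDist π → 0 < iidMean (Fin d) π (h' a) := fun a π hπ => by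
    rw [hmean π hπ, ← hF_eq π hπ]
    exact ((hF π hπ).1 a).lt_of_ne (hnz π hπ a).symm
  obtain ⟨N, hdN, hN⟩ := ((eventually_ge_atTop d).and
    (eventually_all.2 fun a => eventually_uStatistic_pos (h' a) (hpos a))).exists
  have : Nonempty (Fin d ↪ Fin N) := ⟨Fin.castLEEmb hdN⟩
  refine ⟨N, fun w a => uStatistic (h' a) w,
    fun w => ⟨fun a => (hN a w).le, sum_uStatistic_eq_one hsum w⟩, fun π hπ => funext fun a => ?_⟩
  rw [sampleExp_apply, iidMean_uStatistic hπ.2, hmean π hπ, hF_eq π hπ]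
end

section
/- Let k ≥ 1 and let Δ^{k−1} = {p ∈ ℝ^k : p_i ≥ 0 for all i, Σ_{i=1}^k p_i = 1} be the unit simplex in ℝ^k. If f is a real multivariate polynomial in k variables with f(p) > 0 for every p ∈ Δ^{k−1}, then there exists a real multivariate polynomial in k variables all of whose coefficients are nonnegative that agrees with f at every point of Δ^{k−1}. -/
/-!
Multiplying each monomial `x^α` of `f` by `(x₁ + ⋯ + xₖ)^(t - |α|)` does not change `f` on the
simplex and yields a form of degree `t`. By the multinomial theorem its coefficient at `β`
(`|β| = t`), times `β!`, is `t!` times a perturbed evaluation of `f` at `β / t`, in which each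
`x^α` becomes `∏ᵢ xᵢ(xᵢ - h)⋯(xᵢ - (αᵢ - 1)h) / (1 - h)⋯(1 - (|α| - 1)h)` with step `h = 1 / t`.
This expression is jointly continuous in `(h, x)` near `h = 0`, where it is `f(x)`; since the
simplex is compact, it stays positive on the simplex for all small `h`, i.e. for all large `t`.
-/

open Finset MvPolynomial Filter Topology Nat

theorem Finsupp.multinomial_sub_mul_prod_factorial {σ : Type*} [Fintype σ] {α β : σ →₀ ℕ}
    (hαβ : α ≤ β) :
    (β - α).multinomial * ∏ i, (β i)! =
      (∑ i, (β i - α i))! * ∏ i, (β i).descFactorial (α i) := by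
  have hfac : ∀ i, (β i)! = (β i - α i)! * (β i).descFactorial (α i) := fun i =>
    (factorial_mul_descFactorial (hαβ i)).symm
  rw [multinomial_eq_of_support_subset (subset_univ _), Finset.prod_congr rfl fun i _ => hfac i,
    Finset.prod_mul_distrib, ← mul_assoc, mul_comm (Nat.multinomial _ _)]
  exact congrArg (· * _) (Nat.multinomial_spec univ (⇑β - ⇑α))

namespace MvPolynomial

variable {R σ : Type*} [CommSemiring R] [Fintype σ]

theorem coeff_monomial_mul_sum_X_pow_mul_prod_factorial {α β : σ →₀ ℕ} {n : ℕ}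
    (hβ : β.degree = α.degree + n) (c : R) :
    coeff β (monomial α c * (∑ i, X i) ^ n) * ∏ i, ((β i)! : R) =
      c * (n ! * ∏ i, ((β i).descFactorial (α i) : R)) := by
  rw [coeff_monomial_mul']
  split_ifs with hαβ
  · have hdeg : ∑ i, (β i - α i) = n := by
      have := sum_add_distrib (s := univ) (f := fun i => β i - α i) (g := fun i => α i)
      simp only [Nat.sub_add_cancel (hαβ _), Finsupp.degree_eq_sum] at this hβ
      omega
    have key := Finsupp.multinomial_sub_mul_prod_factorial hαβ
    rw [hdeg] at key
    rw [coeff_sum_X_pow_of_fintype, if_pos (by simpa [Finsupp.sum_fintype] using hdeg), mul_assoc]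
    congr 1
    simpa using congrArg (Nat.cast : ℕ → R) key
  · obtain ⟨i, hi⟩ : ∃ i, β i < α i := by
      simpa [Finsupp.le_def] using hαβ
    rw [zero_mul, prod_eq_zero (mem_univ i) (by simp [descFactorial_eq_zero_iff_lt.2 hi]),
      mul_zero, mul_zero]

noncomputable def simplexHomogenization (t : ℕ) (f : MvPolynomial σ R) : MvPolynomial σ R :=
  ∑ α ∈ f.support, monomial α (f.coeff α) * (∑ i, X i) ^ (t - α.degree)

theorem isHomogeneous_simplexHomogenization {t : ℕ} {f : MvPolynomial σ R}
    (hf : f.totalDegree ≤ t) : (simplexHomogenization t f).IsHomogeneous t := by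
  refine IsHomogeneous.sum _ _ _ fun α hα => ?_
  have hαt : α.degree ≤ t := (le_totalDegree hα).trans hf
  convert (isHomogeneous_monomial _ rfl).mul
    (((IsHomogeneous.sum _ _ _ fun i _ => isHomogeneous_X R i)).pow (t - α.degree)) using 1
  omega

theorem eval_simplexHomogenization (t : ℕ) (f : MvPolynomial σ R) {x : σ → R}
    (hx : ∑ i, x i = 1) : eval x (simplexHomogenization t f) = eval x f := by
  simp only [simplexHomogenization, map_sum, map_mul, map_pow, eval_X, hx, one_pow, mul_one,
    eval_monomial]
  exact (eval_eq x f).symm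

theorem coeff_simplexHomogenization_mul_prod_factorial {t : ℕ} {f : MvPolynomial σ R}
    (hf : f.totalDegree ≤ t) {β : σ →₀ ℕ} (hβ : β.degree = t) :
    coeff β (simplexHomogenization t f) * ∏ i, ((β i)! : R) =
      ∑ α ∈ f.support, f.coeff α * ((t - α.degree)! * ∏ i, ((β i).descFactorial (α i) : R)) := by
  rw [simplexHomogenization, coeff_sum, sum_mul]
  refine sum_congr rfl fun α hα => coeff_monomial_mul_sum_X_pow_mul_prod_factorial ?_ _
  have hαt : α.degree ≤ t := (le_totalDegree hα).trans hf
  omega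

end MvPolynomial

section FallingPowers

def fallingPow (x h : ℝ) (n : ℕ) : ℝ := ∏ j ∈ range n, (x - j * h)

@[simp]
theorem fallingPow_zero_step (x : ℝ) (n : ℕ) : fallingPow x 0 n = x ^ n := by
  simp [fallingPow]

theorem fallingPow_natCast_div (b t n : ℕ) :
    fallingPow (b / t) (1 / t) n = b.descFactorial n / (t : ℝ) ^ n := by
  rw [← descPochhammer_eval_eq_descFactorial, descPochhammer_eval_eq_prod_range, fallingPow,
    ← card_range n, ← prod_const, card_range, ← prod_div_distrib]
  exact prod_congr rfl fun j _ => by ring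

variable {σ : Type*} [Fintype σ]

noncomputable def fallingEval (f : MvPolynomial σ ℝ) (h : ℝ) (x : σ → ℝ) : ℝ :=
  ∑ α ∈ f.support, f.coeff α * ((∏ i, fallingPow (x i) h (α i)) / fallingPow 1 h α.degree)

theorem fallingEval_zero (f : MvPolynomial σ ℝ) (x : σ → ℝ) : fallingEval f 0 x = eval x f := by
  simp [fallingEval, eval_eq']

theorem continuousAt_fallingEval (f : MvPolynomial σ ℝ) (x : σ → ℝ) :
    ContinuousAt (fun p : ℝ × (σ → ℝ) => fallingEval f p.1 p.2) (0, x) := by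
  unfold fallingEval
  refine tendsto_finsetSum _ fun α _ => continuousAt_const.mul (ContinuousAt.div ?_ ?_ (by simp))
  all_goals
    unfold fallingPow
    fun_prop

theorem eventually_forall_fallingEval_pos {f : MvPolynomial σ ℝ} {K : Set (σ → ℝ)}
    (hK : IsCompact K) (hf : ∀ x ∈ K, 0 < eval x f) :
    ∀ᶠ h in 𝓝 0, ∀ x ∈ K, 0 < fallingEval f h x :=
  hK.eventually_forall_of_forall_eventually fun x hx =>
    (continuousAt_fallingEval f x).eventually
      (lt_mem_nhds (show 0 < fallingEval f 0 x by rw [fallingEval_zero]; exact hf x hx))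

theorem factorial_mul_fallingEval {f : MvPolynomial σ ℝ} {t : ℕ} (ht : 0 < t)
    (hf : f.totalDegree ≤ t) (b : σ → ℕ) :
    t ! * fallingEval f (1 / t) (fun i => b i / t) =
      ∑ α ∈ f.support, f.coeff α * ((t - α.degree)! * ∏ i, ((b i).descFactorial (α i) : ℝ)) := by
  rw [fallingEval, mul_sum]
  refine sum_congr rfl fun α hα => ?_
  have hαt : α.degree ≤ t := (le_totalDegree hα).trans hf
  have htR : (t : ℝ) ≠ 0 := by positivity
  have hdesc : (t.descFactorial α.degree : ℝ) ≠ 0 := by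
    exact_mod_cast (descFactorial_pos.2 hαt).ne'
  have hone : fallingPow 1 (1 / t) α.degree = t.descFactorial α.degree / (t : ℝ) ^ α.degree := by
    rw [← fallingPow_natCast_div, div_self htR]
  simp only [fallingPow_natCast_div, hone, prod_div_distrib, prod_pow_eq_pow_sum,
    ← Finsupp.degree_eq_sum]
  rw [← factorial_mul_descFactorial hαt]
  push_cast
  field_simp

end FallingPowers

theorem natCast_div_mem_stdSimplex {σ : Type*} [Fintype σ] {β : σ →₀ ℕ} {t : ℕ} (ht : 0 < t)
    (hβ : β.degree = t) : (fun i => (β i : ℝ) / t) ∈ stdSimplex ℝ σ := by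
  refine ⟨fun i => by positivity, ?_⟩
  rw [← sum_div, ← Nat.cast_sum, ← Finsupp.degree_eq_sum, hβ, div_self (by positivity)]

theorem stmt6_general (k : ℕ) (f : MvPolynomial (Fin k) ℝ)
    (hf : ∀ p : Fin k → ℝ, (∀ i, 0 ≤ p i) → ∑ i, p i = 1 →
      0 < MvPolynomial.eval p f) :
    ∃ q : MvPolynomial (Fin k) ℝ, (∀ m : Fin k →₀ ℕ, 0 ≤ q.coeff m) ∧
      ∀ p : Fin k → ℝ, (∀ i, 0 ≤ p i) → ∑ i, p i = 1 →
        MvPolynomial.eval p f = MvPolynomial.eval p q := by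
  obtain ⟨t, ht, hft, hpos⟩ : ∃ t : ℕ, 0 < t ∧ f.totalDegree ≤ t ∧
      ∀ x ∈ stdSimplex ℝ (Fin k), 0 < fallingEval f (1 / t) x :=
    ((eventually_gt_atTop 0).and <| (eventually_ge_atTop _).and <|
      tendsto_one_div_atTop_nhds_zero_nat.eventually <|
        eventually_forall_fallingEval_pos (isCompact_stdSimplex ℝ (Fin k))
          fun x hx => hf x hx.1 hx.2).exists
  refine ⟨simplexHomogenization t f, fun β => ?_, fun p _ hp =>
    (eval_simplexHomogenization t f hp).symm⟩
  by_cases hβ : β.degree = t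
  · have hcoeff := coeff_simplexHomogenization_mul_prod_factorial hft hβ
    rw [← factorial_mul_fallingEval ht hft] at hcoeff
    have hprod : 0 < ∏ i, ((β i)! : ℝ) := prod_pos fun i _ => by positivity
    refine (pos_of_mul_pos_left ?_ hprod.le).le
    rw [hcoeff]
    exact mul_pos (by positivity) (hpos _ (natCast_div_mem_stdSimplex ht hβ))
  · exact ((isHomogeneous_simplexHomogenization hft).coeff_eq_zero hβ).ge

/-- Lemma: polynomials positive on the simplex can be written with
nonnegative coefficients. Let `k ≥ 1` and let `Δ^{k−1}` be the unit simplex in `ℝ^k`.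
If a real multivariate polynomial `f` in `k` variables satisfies `f(p) > 0` for every
`p ∈ Δ^{k−1}`, then there is a real multivariate polynomial in `k` variables, all of whose
coefficients are nonnegative, agreeing with `f` at every point of `Δ^{k−1}`. -/
theorem stmt6 (k : ℕ) (hk : 1 ≤ k) (f : MvPolynomial (Fin k) ℝ)
    (hf : ∀ p : Fin k → ℝ, (∀ i, 0 ≤ p i) → ∑ i, p i = 1 →
      0 < MvPolynomial.eval p f) :
    ∃ q : MvPolynomial (Fin k) ℝ, (∀ m : Fin k →₀ ℕ, 0 ≤ q.coeff m) ∧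
      ∀ p : Fin k → ℝ, (∀ i, 0 ≤ p i) → ∑ i, p i = 1 →
        MvPolynomial.eval p f = MvPolynomial.eval p q :=
  stmt6_general k f hf
end

section
/- Let A be a finite set with |A| = 2 and F : Δ(A) → Δ(A). Then there exist N ∈ ℕ and g : A^N → Δ(A) such that F arises from N action samples via g, if and only if F is a polynomial and at least one of the following holds: (a) for every π in the interior of Δ(A) (i.e. π(a) > 0 for both a ∈ A), F(π) lies in the interior of Δ(A); or (b) F is constant on Δ(A), equal to the point mass at one of the two elements of A. -/
/-!
With two actions a distribution is determined by `x = π a ∈ [0, 1]`, and a rule that only looks at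
the number `j` of samples equal to `a` gives `F π a = ∑ⱼ dⱼ bₙⱼ(x)` in the Bernstein basis, for
arbitrary weights `dⱼ ∈ [0, 1]`. So the question is which polynomials have Bernstein coefficients in
`[0, 1]` in some degree. If `P` is positive on `[0, 1]`, its degree-`n` coefficients converge
uniformly to the values `P (j / n)` and are eventually positive (Bernstein, Pólya); zeros at the
endpoints are factored out as `xᵃ (1 - x)ᵇ`, which only shifts coefficients. When `P` and `1 - P`
are both positive on `(0, 1)`, both have nonnegative coefficients in a common degree, and by
uniqueness of Bernstein coefficients these add up to those of `1`, which are all `1`.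

Conversely a sampled map is visibly polynomial and maps the interior into itself unless some action
gets weight zero after every sample, in which case it is the point mass at the other action.
-/

open Filter Asymptotics Topology

open Finset Polynomial
open scoped NNReal

namespace bernsteinPolynomial

variable {R : Type*} [CommRing R]

theorem succ_smul_X_mul (n ν : ℕ) :
    (n + 1) • (X * bernsteinPolynomial R n ν)
      = (ν + 1) • bernsteinPolynomial R (n + 1) (ν + 1) := by
  have := congrArg (Nat.cast (R := R[X])) (Nat.add_one_mul_choose_eq n ν)
  simp only [bernsteinPolynomial, nsmul_eq_mul, Nat.add_sub_add_right]
  push_cast at this ⊢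
  linear_combination X ^ (ν + 1) * (1 - X) ^ (n - ν) * this

theorem succ_smul_one_sub_X_mul (n ν : ℕ) :
    (n + 1) • ((1 - X) * bernsteinPolynomial R n ν)
      = (n + 1 - ν) • bernsteinPolynomial R (n + 1) ν := by
  rcases le_or_gt ν n with h | h
  · have := congrArg (Nat.cast (R := R[X])) (Nat.choose_mul_succ_eq n ν)
    simp only [bernsteinPolynomial, nsmul_eq_mul, Nat.sub_add_comm h] at this ⊢
    push_cast at this ⊢
    linear_combination X ^ ν * (1 - X) ^ (n - ν) * (1 - X) * this
  · rw [eq_zero_of_lt R h, Nat.sub_eq_zero_of_le h, mul_zero, smul_zero, zero_smul]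

theorem sum_choose_smul (n i : ℕ) (h : i ≤ n) :
    ∑ j ∈ range (n + 1), j.choose i • bernsteinPolynomial R n j = n.choose i • X ^ i := by
  obtain ⟨m, rfl⟩ := Nat.exists_eq_add_of_le h
  rw [show i + m + 1 = i + (m + 1) by ring, sum_range_add,
    sum_eq_zero fun j hj => by rw [Nat.choose_eq_zero_of_lt (mem_range.mp hj), zero_smul], zero_add]
  calc ∑ k ∈ range (m + 1), (i + k).choose i • bernsteinPolynomial R (i + m) (i + k)
      = ∑ k ∈ range (m + 1), (i + m).choose i • (X ^ i * bernsteinPolynomial R m k) := by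
        refine sum_congr rfl fun k hk => ?_
        have hk : k ≤ m := Nat.lt_succ_iff.mp (mem_range.mp hk)
        have := congrArg (Nat.cast (R := R[X]))
          (Nat.choose_mul (n := i + m) (k := i + k) (s := i) (by omega))
        simp only [Nat.add_sub_cancel_left] at this
        simp only [bernsteinPolynomial, nsmul_eq_mul, pow_add, Nat.add_sub_add_left]
        push_cast at this ⊢
        linear_combination X ^ i * X ^ k * (1 - X) ^ (m - k) * this
    _ = (i + m).choose i • X ^ i := by rw [← smul_sum, ← mul_sum, sum, mul_one]

variable {K : Type*} [Field K] [CharZero K]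

theorem X_mul_eq_smul (n ν : ℕ) :
    X * bernsteinPolynomial K n ν
      = ((ν + 1 : K) / (n + 1)) • bernsteinPolynomial K (n + 1) (ν + 1) := by
  have h := succ_smul_X_mul (R := K) n ν
  rw [← Nat.cast_smul_eq_nsmul K, ← Nat.cast_smul_eq_nsmul K] at h
  push_cast at h
  rw [div_eq_inv_mul, mul_smul, ← h, inv_smul_smul₀ (Nat.cast_add_one_ne_zero n)]

theorem one_sub_X_mul_eq_smul (n ν : ℕ) :
    (1 - X) * bernsteinPolynomial K n ν
      = (((n + 1 - ν : ℕ) : K) / (n + 1)) • bernsteinPolynomial K (n + 1) ν := by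
  have h := succ_smul_one_sub_X_mul (R := K) n ν
  rw [← Nat.cast_smul_eq_nsmul K, ← Nat.cast_smul_eq_nsmul K] at h
  rw [div_eq_inv_mul, mul_smul, ← h, Nat.cast_add_one, inv_smul_smul₀ (Nat.cast_add_one_ne_zero n)]

theorem eq_zero_of_sum_smul_eq_zero {n : ℕ} {c : ℕ → K}
    (h : ∑ ν ∈ range (n + 1), c ν • bernsteinPolynomial K n ν = 0) : ∀ ν ≤ n, c ν = 0 := by
  induction n generalizing c with
  | zero =>
    intro ν hν
    simpa [Nat.le_zero.mp hν, bernsteinPolynomial] using h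
  | succ n ih =>
    have h0 : c 0 = 0 := by simpa [eval_finsetSum, eval_at_0] using congrArg (eval 0) h
    have hX : X * ∑ ν ∈ range (n + 1),
        (c (ν + 1) * ((n : K) + 1) / (ν + 1)) • bernsteinPolynomial K n ν = 0 := by
      rw [← h, sum_range_succ' _ (n + 1), h0, zero_smul, add_zero, mul_sum]
      refine sum_congr rfl fun ν _ => ?_
      rw [mul_smul_comm, X_mul_eq_smul, smul_smul]
      congr 1
      field_simp
    have hc := ih ((mul_eq_zero.mp hX).resolve_left X_ne_zero)
    rintro (_ | ν) hν
    · exact h0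
    · simpa [Nat.cast_add_one_ne_zero] using hc ν (by omega)

end bernsteinPolynomial

def HasNonnegBernsteinCoeffs (n : ℕ) (p : ℝ[X]) : Prop :=
  ∃ c : ℕ → ℝ≥0, p = ∑ ν ∈ range (n + 1), (c ν : ℝ) • bernsteinPolynomial ℝ n ν

namespace HasNonnegBernsteinCoeffs

variable {n : ℕ} {p q : ℝ[X]}

theorem add (hp : HasNonnegBernsteinCoeffs n p) (hq : HasNonnegBernsteinCoeffs n q) :
    HasNonnegBernsteinCoeffs n (p + q) := by
  obtain ⟨c, rfl⟩ := hp
  obtain ⟨d, rfl⟩ := hq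
  exact ⟨c + d, by simp only [Pi.add_apply, NNReal.coe_add, add_smul, sum_add_distrib]⟩

theorem X_mul (hp : HasNonnegBernsteinCoeffs n p) : HasNonnegBernsteinCoeffs (n + 1) (X * p) := by
  obtain ⟨c, rfl⟩ := hp
  refine ⟨fun ν => ν / (n + 1) * c (ν - 1), ?_⟩
  rw [mul_sum, sum_range_succ' _ (n + 1)]
  simp only [Nat.cast_zero, zero_div, zero_mul, NNReal.coe_zero, zero_smul, add_zero,
    Nat.add_sub_cancel]
  refine sum_congr rfl fun ν _ => ?_
  rw [mul_smul_comm, bernsteinPolynomial.X_mul_eq_smul, smul_smul]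
  push_cast
  ring_nf

theorem one_sub_X_mul (hp : HasNonnegBernsteinCoeffs n p) :
    HasNonnegBernsteinCoeffs (n + 1) ((1 - X) * p) := by
  obtain ⟨c, rfl⟩ := hp
  refine ⟨fun ν => (n + 1 - ν : ℕ) / (n + 1) * c ν, ?_⟩
  rw [mul_sum, sum_range_succ _ (n + 1)]
  simp only [Nat.sub_self, Nat.cast_zero, zero_div, zero_mul, NNReal.coe_zero, zero_smul, add_zero]
  refine sum_congr rfl fun ν _ => ?_
  rw [mul_smul_comm, bernsteinPolynomial.one_sub_X_mul_eq_smul, smul_smul]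
  simp only [NNReal.coe_mul, NNReal.coe_div, NNReal.coe_natCast, NNReal.coe_add, NNReal.coe_one]
  ring_nf

theorem succ (hp : HasNonnegBernsteinCoeffs n p) : HasNonnegBernsteinCoeffs (n + 1) p := by
  simpa [← add_mul] using hp.X_mul.add hp.one_sub_X_mul

theorem mono {m : ℕ} (hp : HasNonnegBernsteinCoeffs n p) (hnm : n ≤ m) :
    HasNonnegBernsteinCoeffs m p := by
  induction m, hnm using Nat.le_induction with
  | base => exact hp
  | succ m _ ih => exact ih.succ

theorem X_pow_mul (hp : HasNonnegBernsteinCoeffs n p) (k : ℕ) :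
    HasNonnegBernsteinCoeffs (n + k) (X ^ k * p) := by
  induction k with
  | zero => simpa using hp
  | succ k ih => rw [← add_assoc, pow_succ', mul_assoc]; exact ih.X_mul

theorem one_sub_X_pow_mul (hp : HasNonnegBernsteinCoeffs n p) (k : ℕ) :
    HasNonnegBernsteinCoeffs (n + k) ((1 - X) ^ k * p) := by
  induction k with
  | zero => simpa using hp
  | succ k ih => rw [← add_assoc, pow_succ', mul_assoc]; exact ih.one_sub_X_mul

end HasNonnegBernsteinCoeffs

-- For `i > n` both sides are `0`, through division by `0`.
theorem Nat.cast_choose_div_cast_choose (i j n : ℕ) :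
    (j.choose i : ℝ) / n.choose i = ∏ t ∈ range i, ((j - t : ℝ) / (n - t)) := by
  rw [Nat.cast_choose_eq_descPochhammer_div, Nat.cast_choose_eq_descPochhammer_div,
    div_div_div_cancel_right₀ (by positivity), descPochhammer_eval_eq_prod_range,
    descPochhammer_eval_eq_prod_range, prod_div_distrib]

theorem Polynomial.eq_sum_bernsteinPolynomial (p : ℝ[X]) {n : ℕ} (hn : p.natDegree ≤ n) :
    p = ∑ j ∈ range (n + 1), (∑ i ∈ range (p.natDegree + 1),
      p.coeff i * ((j.choose i : ℝ) / n.choose i)) • bernsteinPolynomial ℝ n j := by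
  have hX : ∀ i ≤ n, (X : ℝ[X]) ^ i
      = ∑ j ∈ range (n + 1), ((j.choose i : ℝ) / n.choose i) • bernsteinPolynomial ℝ n j := by
    intro i hi
    have hc : (n.choose i : ℝ) ≠ 0 := by positivity [Nat.choose_pos hi]
    simp only [div_eq_inv_mul, mul_smul, ← smul_sum, Nat.cast_smul_eq_nsmul,
      bernsteinPolynomial.sum_choose_smul n i hi]
    rw [← Nat.cast_smul_eq_nsmul ℝ, inv_smul_smul₀ hc]
  conv_lhs => rw [as_sum_range_C_mul_X_pow p]
  simp only [sum_smul, mul_smul]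
  rw [sum_comm]
  refine sum_congr rfl fun i hi => ?_
  rw [← smul_sum, ← hX i ((Nat.lt_succ_iff.mp (mem_range.mp hi)).trans hn), C_mul']

theorem exists_hasNonnegBernsteinCoeffs_of_pos_on_Icc {p : ℝ[X]}
    (hp : ∀ x ∈ Set.Icc (0 : ℝ) 1, 0 < p.eval x) : ∃ n, HasNonnegBernsteinCoeffs n p := by
  set d := p.natDegree
  -- `Φ (1 / n, j / n)` is the `j`-th degree-`n` Bernstein coefficient of `p`, and `Φ (0, ·) = p`.
  let Φ : ℝ × ℝ → ℝ := fun z =>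
    ∑ i ∈ range (d + 1), p.coeff i * ∏ t ∈ range i, ((z.2 - t * z.1) / (1 - t * z.1))
  have hΦ : ∀ x, Φ (0, x) = p.eval x := by simp [Φ, d, eval_eq_sum_range]
  have hev : ∀ᶠ h in 𝓝 (0 : ℝ), ∀ x ∈ Set.Icc (0 : ℝ) 1, 0 < Φ (h, x) := by
    refine isCompact_Icc.eventually_forall_of_forall_eventually fun x hx => ?_
    have hcont : ContinuousAt Φ (0, x) := by fun_prop (disch := simp)
    exact hcont.eventually (lt_mem_nhds ((hΦ x).symm ▸ hp x hx))
  obtain ⟨n, hpos, hdn⟩ :=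
    ((tendsto_one_div_atTop_nhds_zero_nat.eventually hev).and (eventually_ge_atTop (d + 1))).exists
  have hn : (n : ℝ) ≠ 0 := by positivity [show 0 < n by omega]
  refine ⟨n, fun j => (Φ (1 / n, j / n)).toNNReal, ?_⟩
  refine (p.eq_sum_bernsteinPolynomial (by omega)).trans (sum_congr rfl fun j hj => ?_)
  have hj : j ≤ n := Nat.lt_succ_iff.mp (mem_range.mp hj)
  have hjn : (j / n : ℝ) ∈ Set.Icc (0 : ℝ) 1 :=
    ⟨by positivity, div_le_one_of_le₀ (by exact_mod_cast hj) (Nat.cast_nonneg n)⟩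
  rw [Real.coe_toNNReal _ (hpos _ hjn).le]
  refine congrArg (· • _) (sum_congr rfl fun i _ => ?_)
  rw [Nat.cast_choose_div_cast_choose]
  congr 1
  refine prod_congr rfl fun t _ => ?_
  field_simp

theorem Polynomial.exists_eq_X_pow_mul_one_sub_X_pow_mul {R : Type*} [CommRing R] {p : R[X]}
    (hp : p ≠ 0) :
    ∃ (a b : ℕ) (q : R[X]), p = X ^ a * (1 - X) ^ b * q ∧ q.eval 0 ≠ 0 ∧ q.eval 1 ≠ 0 := by
  obtain ⟨q₀, hpq₀, hq₀⟩ := p.exists_eq_pow_rootMultiplicity_mul_and_not_dvd hp 0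
  have hq₀0 : q₀ ≠ 0 := by rintro rfl; exact hp (by simpa using hpq₀)
  obtain ⟨q, hq₀q, hq⟩ := q₀.exists_eq_pow_rootMultiplicity_mul_and_not_dvd hq₀0 1
  generalize p.rootMultiplicity 0 = a at hpq₀
  generalize q₀.rootMultiplicity 1 = b at hq₀q
  rw [dvd_iff_isRoot, IsRoot.def, hq₀q] at hq₀
  rw [dvd_iff_isRoot, IsRoot.def] at hq
  refine ⟨a, b, C ((-1) ^ b) * q, ?_, ?_, ?_⟩
  · rw [hpq₀, hq₀q, C_0, C_1, sub_zero, show (X - 1 : R[X]) = -1 * (1 - X) by ring, mul_pow]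
    simp only [map_pow, map_neg, map_one]
    ring
  · simpa using hq₀
  · simpa using hq

theorem exists_hasNonnegBernsteinCoeffs_of_pos_on_Ioo {p : ℝ[X]}
    (hp : ∀ x ∈ Set.Ioo (0 : ℝ) 1, 0 < p.eval x) : ∃ n, HasNonnegBernsteinCoeffs n p := by
  have hp0 : p ≠ 0 := by rintro rfl; simpa using hp (1 / 2) (by norm_num)
  obtain ⟨a, b, q, rfl, hq0, hq1⟩ := p.exists_eq_X_pow_mul_one_sub_X_pow_mul hp0
  have hqIoo : ∀ x ∈ Set.Ioo (0 : ℝ) 1, 0 < q.eval x := fun x hx => by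
    have hx' : 0 < x ^ a * (1 - x) ^ b := by have := sub_pos.mpr hx.2; have := hx.1; positivity
    simpa [hx'] using hp x hx
  have hqIcc : ∀ x ∈ Set.Icc (0 : ℝ) 1, 0 ≤ q.eval x := by
    rw [← closure_Ioo zero_ne_one]
    exact closure_minimal (fun x hx => (hqIoo x hx).le) (isClosed_le continuous_const q.continuous)
  obtain ⟨n, hn⟩ := exists_hasNonnegBernsteinCoeffs_of_pos_on_Icc fun x hx => by
    rcases Set.eq_endpoints_or_mem_Ioo_of_mem_Icc hx with rfl | rfl | hx'
    · exact (hqIcc 0 hx).lt_of_ne' hq0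
    · exact (hqIcc 1 hx).lt_of_ne' hq1
    · exact hqIoo x hx'
  exact ⟨n + b + a, by rw [mul_assoc]; exact (hn.one_sub_X_pow_mul b).X_pow_mul a⟩

theorem exists_sum_bernsteinPolynomial_of_mapsTo_Ioo {P : ℝ[X]}
    (hP : ∀ x ∈ Set.Ioo (0 : ℝ) 1, P.eval x ∈ Set.Ioo (0 : ℝ) 1) :
    ∃ (N : ℕ) (d : ℕ → ℝ), (∀ j ≤ N, d j ∈ Set.Icc (0 : ℝ) 1) ∧
      P = ∑ j ∈ range (N + 1), d j • bernsteinPolynomial ℝ N j := by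
  obtain ⟨N₁, h₁⟩ := exists_hasNonnegBernsteinCoeffs_of_pos_on_Ioo fun x hx => (hP x hx).1
  obtain ⟨N₂, h₂⟩ := exists_hasNonnegBernsteinCoeffs_of_pos_on_Ioo (p := 1 - P) fun x hx => by
    simpa using (hP x hx).2
  obtain ⟨c, hc⟩ := h₁.mono (le_max_left N₁ N₂)
  obtain ⟨c', hc'⟩ := h₂.mono (le_max_right N₁ N₂)
  have hsum : ∀ j ≤ max N₁ N₂, (c j : ℝ) + c' j - 1 = 0 := by
    apply bernsteinPolynomial.eq_zero_of_sum_smul_eq_zero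
    simp only [sub_smul, add_smul, one_smul, sum_sub_distrib, sum_add_distrib, ← hc, ← hc',
      bernsteinPolynomial.sum]
    ring
  exact ⟨max N₁ N₂, fun j => c j, fun j hj => ⟨(c j).2, by linarith [hsum j hj, (c' j).2]⟩, hc⟩

theorem Polynomial.eval_mvPolynomial_aeval {σ R : Type*} [CommRing R] (f : σ → R[X])
    (p : MvPolynomial σ R) (x : R) :
    (MvPolynomial.aeval f p).eval x = MvPolynomial.eval (fun i => (f i).eval x) p := by
  simpa [MvPolynomial.coe_aeval_eq_eval] using
    MvPolynomial.comp_aeval_apply f (Polynomial.aeval x) p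

section Sampling

variable {A : Type} [Fintype A] {N : ℕ} {g : (Fin N → A) → A → ℝ} {μ : A → ℝ}

theorem sampleExp_apply_s7 (a' : A) : sampleExp N g μ a' = ∑ v, (∏ k, μ (v k)) * g v a' := by
  simp [sampleExp, Finset.sum_apply]

theorem IsDist.sum_prod_eq_one (hμ : IsDist μ) : ∑ v : Fin N → A, ∏ k, μ (v k) = 1 := by
  rw [← Fintype.prod_sum fun (_ : Fin N) a => μ a, hμ.2, prod_const_one]

theorem isDist_sampleExp (hg : ∀ v, IsDist (g v)) (hμ : IsDist μ) : IsDist (sampleExp N g μ) := by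
  refine ⟨fun a' => ?_, ?_⟩
  · rw [sampleExp_apply_s7]
    exact sum_nonneg fun v _ => mul_nonneg (prod_nonneg fun k _ => hμ.1 _) ((hg v).1 a')
  · simp only [sampleExp_apply_s7]
    rw [sum_comm]
    simp [← mul_sum, (hg _).2, hμ.sum_prod_eq_one]

theorem sampleExp_const (hμ : IsDist μ) (ν : A → ℝ) : sampleExp N (fun _ => ν) μ = ν := by
  rw [sampleExp, ← sum_smul, hμ.sum_prod_eq_one, one_smul]

theorem sampleExp_pos {a' : A} (hg : ∀ v, 0 ≤ g v a') (hμ : ∀ a, 0 < μ a) (h : ∃ v, 0 < g v a') :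
    0 < sampleExp N g μ a' := by
  obtain ⟨v, hv⟩ := h
  rw [sampleExp_apply_s7]
  exact sum_pos' (fun w _ => mul_nonneg (prod_nonneg fun k _ => (hμ _).le) (hg w))
    ⟨v, mem_univ v, mul_pos (prod_pos fun k _ => hμ _) hv⟩

theorem exists_mvPolynomial_eval_eq_sampleExp (N : ℕ) (g : (Fin N → A) → A → ℝ) (a' : A) :
    ∃ p : MvPolynomial A ℝ, ∀ μ, sampleExp N g μ a' = MvPolynomial.eval μ p :=
  ⟨∑ v, (∏ k, MvPolynomial.X (v k)) * MvPolynomial.C (g v a'), fun μ => by simp [sampleExp_apply_s7]⟩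

variable [DecidableEq A]

theorem isDist_unitMass (a : A) : IsDist (unitMass a) :=
  ⟨fun _ => by unfold unitMass; split_ifs <;> norm_num, by simp [unitMass]⟩

theorem IsDist.eq_unitMass {a : A} (hμ : IsDist μ) (h : ∀ x ≠ a, μ x = 0) : μ = unitMass a := by
  have ha : μ a = 1 := by rw [← hμ.2, Fintype.sum_eq_single a h]
  funext x
  by_cases hx : x = a
  · simp [unitMass, hx, ha]
  · simp [unitMass, hx, h x hx]

end Sampling

section TwoPoint

variable {A : Type} {a b : A}

theorem sum_eq_add_of_forall_eq_or_eq [Fintype A] (hab : a ≠ b) (hA : ∀ x, x = a ∨ x = b)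
    (f : A → ℝ) : ∑ x, f x = f a + f b :=
  Fintype.sum_eq_add a b hab fun x hx => ((hA x).elim hx.1 hx.2).elim

variable [DecidableEq A]

def twoPointDist (a : A) (x : ℝ) : A → ℝ := fun a' => if a' = a then x else 1 - x

@[simp] theorem twoPointDist_self (a : A) (x : ℝ) : twoPointDist a x a = x := if_pos rfl

@[simp] theorem twoPointDist_of_ne {a a' : A} (h : a' ≠ a) (x : ℝ) : twoPointDist a x a' = 1 - x :=
  if_neg h

variable [Fintype A]

theorem isDist_twoPointDist (hab : a ≠ b) (hA : ∀ x, x = a ∨ x = b) {x : ℝ}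
    (hx : x ∈ Set.Icc (0 : ℝ) 1) : IsDist (twoPointDist a x) := by
  refine ⟨fun a' => ?_, ?_⟩
  · rcases hA a' with rfl | rfl <;> simp [hab.symm, hx.1, hx.2]
  · simp [sum_eq_add_of_forall_eq_or_eq hab hA, hab.symm]

theorem IsDist.eq_twoPointDist (hab : a ≠ b) (hA : ∀ x, x = a ∨ x = b) {μ : A → ℝ}
    (hμ : IsDist μ) : μ = twoPointDist a (μ a) := by
  have h := hμ.2
  rw [sum_eq_add_of_forall_eq_or_eq hab hA] at h
  funext x
  rcases hA x with rfl | rfl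
  · simp
  · simp [hab.symm]; linarith

theorem sum_prod_mul_card_filter (hab : a ≠ b) (hA : ∀ x, x = a ∨ x = b) {N : ℕ} {μ : A → ℝ}
    (hμ : μ a + μ b = 1) (f : ℕ → ℝ) :
    ∑ v : Fin N → A, (∏ k, μ (v k)) * f #{k | v k = a}
      = ∑ j ∈ range (N + 1), f j * (bernsteinPolynomial ℝ N j).eval (μ a) := by
  let e : Finset (Fin N) ≃ (Fin N → A) :=
    { toFun s k := if k ∈ s then a else b
      invFun v := {k | v k = a}
      left_inv s := by ext k; by_cases hk : k ∈ s <;> simp [hk, hab.symm]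
      right_inv v := by funext k; rcases hA (v k) with h | h <;> simp [h, hab.symm] }
  rw [← e.sum_comp, ← powerset_univ]
  have he : ∀ s, (∏ k, μ (e s k)) * f #{k | e s k = a} = μ a ^ #s * μ b ^ (N - #s) * f #s := by
    intro s
    have hfilter : ({k | e s k = a} : Finset (Fin N)) = s := e.left_inv s
    rw [hfilter]
    simp only [e, Equiv.coe_fn_mk, apply_ite μ]
    rw [prod_ite, prod_const, prod_const, filter_mem_eq_inter, univ_inter, filter_not,
      filter_mem_eq_inter, univ_inter, card_univ_sdiff, Fintype.card_fin]
  simp only [he]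
  rw [sum_powerset_apply_card (fun m => μ a ^ m * μ b ^ (N - m) * f m), card_univ, Fintype.card_fin]
  refine sum_congr rfl fun j _ => ?_
  rw [show μ b = 1 - μ a by linarith]
  simp [bernsteinPolynomial, nsmul_eq_mul]
  ring

theorem forall_exists_pos_or_eq_unitMass (hab : a ≠ b) (hA : ∀ x, x = a ∨ x = b) {ι : Type*}
    {g : ι → A → ℝ} (hg : ∀ i, IsDist (g i)) :
    (∀ a', ∃ i, 0 < g i a') ∨ ∃ a₀, ∀ i, g i = unitMass a₀ := by
  by_cases h : ∀ a', ∃ i, 0 < g i a'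
  · exact Or.inl h
  push Not at h
  obtain ⟨a', ha'⟩ := h
  have hzero : ∀ i, g i a' = 0 := fun i => (ha' i).antisymm ((hg i).1 a')
  obtain ⟨a₀, ha₀⟩ : ∃ a₀, ∀ x ≠ a₀, x = a' := by
    rcases hA a' with rfl | rfl
    · exact ⟨b, fun x hx => (hA x).resolve_right hx⟩
    · exact ⟨a, fun x hx => (hA x).resolve_left hx⟩
  exact Or.inr ⟨a₀, fun i => (hg i).eq_unitMass fun x hx => ha₀ x hx ▸ hzero i⟩

theorem exists_polynomial_eval_eq_mvPolynomial_eval (hab : a ≠ b) (hA : ∀ x, x = a ∨ x = b)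
    (p : MvPolynomial A ℝ) : ∃ P : ℝ[X], ∀ π, IsDist π → MvPolynomial.eval π p = P.eval (π a) := by
  refine ⟨MvPolynomial.aeval (fun a' => if a' = a then X else 1 - X) p, fun π hπ => ?_⟩
  rw [Polynomial.eval_mvPolynomial_aeval]
  congr
  rw [hπ.eq_twoPointDist hab hA]
  funext a'
  split_ifs with h <;> simp [h]

theorem exists_sampleExp_eq_of_interior (hab : a ≠ b) (hA : ∀ x, x = a ∨ x = b)
    {F : (A → ℝ) → A → ℝ} (hF : ∀ π, IsDist π → IsDist (F π)) {p : MvPolynomial A ℝ}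
    (hp : ∀ π, IsDist π → F π a = MvPolynomial.eval π p)
    (hpos : ∀ π, IsDist π → (∀ a, 0 < π a) → ∀ a', 0 < F π a') :
    ∃ (N : ℕ) (g : (Fin N → A) → A → ℝ), (∀ v, IsDist (g v)) ∧
      ∀ π, IsDist π → F π = sampleExp N g π := by
  obtain ⟨P, hP⟩ := exists_polynomial_eval_eq_mvPolynomial_eval hab hA p
  have hFP : ∀ π, IsDist π → F π a = P.eval (π a) := fun π hπ => (hp π hπ).trans (hP π hπ)
  have hPIoo : ∀ x ∈ Set.Ioo (0 : ℝ) 1, P.eval x ∈ Set.Ioo (0 : ℝ) 1 := by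
    intro x hx
    have hπ := isDist_twoPointDist hab hA (Set.Ioo_subset_Icc_self hx)
    have hπpos : ∀ a', 0 < twoPointDist a x a' := fun a' => by
      rcases hA a' with rfl | rfl <;> simp [hab.symm, hx.1, hx.2]
    have hsum := (hF _ hπ).2
    rw [sum_eq_add_of_forall_eq_or_eq hab hA] at hsum
    rw [← twoPointDist_self a x, ← hFP _ hπ]
    exact ⟨hpos _ hπ hπpos a, by linarith [hpos _ hπ hπpos b]⟩
  obtain ⟨N, d, hd, hPd⟩ := exists_sum_bernsteinPolynomial_of_mapsTo_Ioo hPIoo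
  have hg : ∀ v : Fin N → A, IsDist (twoPointDist a (d #{k | v k = a})) := fun v =>
    isDist_twoPointDist hab hA (hd _ ((card_le_univ _).trans (Fintype.card_fin N).le))
  refine ⟨N, fun v => twoPointDist a (d #{k | v k = a}), hg, fun π hπ => ?_⟩
  have hπ₂ : π a + π b = 1 := by rw [← hπ.2, sum_eq_add_of_forall_eq_or_eq hab hA]
  rw [(hF π hπ).eq_twoPointDist hab hA, (isDist_sampleExp hg hπ).eq_twoPointDist hab hA,
    sampleExp_apply_s7]
  simp only [twoPointDist_self]
  rw [sum_prod_mul_card_filter hab hA hπ₂, hFP π hπ, hPd, eval_finsetSum]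
  simp

end TwoPoint

/-- Corollary: the two-action case. Let `|A| = 2` and `F : Δ(A) → Δ(A)`.
Then `F` arises from some number of action samples if and only if `F` is a polynomial and
either (a) `F` maps the interior of the simplex into the interior of the simplex, or
(b) `F` is constant on `Δ(A)`, equal to the point mass at one of the two elements of `A`. -/
theorem stmt7 {A : Type} [Fintype A] [DecidableEq A] (hA : Fintype.card A = 2)
    (F : (A → ℝ) → A → ℝ) (hF : ∀ π, IsDist π → IsDist (F π)) :
    (∃ (N : ℕ) (g : (Fin N → A) → A → ℝ), (∀ v, IsDist (g v)) ∧
      ∀ π : A → ℝ, IsDist π → F π = sampleExp N g π) ↔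
    ((∀ a' : A, ∃ p : MvPolynomial A ℝ,
        ∀ π : A → ℝ, IsDist π → F π a' = MvPolynomial.eval π p) ∧
      ((∀ π : A → ℝ, IsDist π → (∀ a, 0 < π a) → ∀ a', 0 < F π a') ∨
       (∃ a₀ : A, ∀ π : A → ℝ, IsDist π → F π = unitMass a₀))) := by
  obtain ⟨a, b, hab, huniv⟩ := card_eq_two.mp (by rw [card_univ, hA] : #(univ : Finset A) = 2)
  have hA' : ∀ x, x = a ∨ x = b := fun x => by simpa [huniv] using mem_univ x
  constructor
  · rintro ⟨N, g, hg, hFg⟩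
    refine ⟨fun a' => ?_, ?_⟩
    · obtain ⟨p, hp⟩ := exists_mvPolynomial_eval_eq_sampleExp N g a'
      exact ⟨p, fun π hπ => by rw [hFg π hπ, hp]⟩
    rcases forall_exists_pos_or_eq_unitMass hab hA' hg with hpos | ⟨a₀, hg₀⟩
    · exact Or.inl fun π hπ hπpos a' =>
        hFg π hπ ▸ sampleExp_pos (fun v => (hg v).1 a') hπpos (hpos a')
    · refine Or.inr ⟨a₀, fun π hπ => ?_⟩
      rw [hFg π hπ, show g = fun _ => unitMass a₀ from funext hg₀, sampleExp_const hπ]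
  · rintro ⟨hpoly, hpos | ⟨a₀, hconst⟩⟩
    · obtain ⟨p, hp⟩ := hpoly a
      exact exists_sampleExp_eq_of_interior hab hA' hF hp hpos
    · exact ⟨0, fun _ => unitMass a₀, fun _ => isDist_unitMass a₀,
        fun π hπ => by rw [hconst π hπ, sampleExp_const hπ]⟩
end

section
/- Let A be a finite nonempty set and F : Δ(A) → Δ(A) continuous. For each N ∈ ℕ define g_N : A^N → Δ(A) by g_N(a_1,…,a_N) = F((1/N) Σ_{k=1}^N δ_{a_k}) (where δ_a denotes the point mass at a), and define F̂_N(π) = Σ_{(a_1,…,a_N)∈A^N} (∏_{k=1}^N π(a_k)) g_N(a_1,…,a_N). Then F̂_N converges uniformly to F: sup_{π∈Δ(A)} ‖F̂_N(π) − F(π)‖₂ → 0 as N → ∞, where ‖·‖₂ is the Euclidean norm on ℝ^A. -/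
open Filter Asymptotics Topology

/-! `F` is uniformly continuous and bounded on the compact simplex, so `F(μ)` is `ε`-close
to `F(π)` when `μ` is `η`-close to `π` and within a fixed `D` of it otherwise; hence
`‖F(μ) - F(π)‖ ≤ ε + (D / η²) ‖μ - π‖²`. Averaging over the empirical distribution `μ` of
`N` i.i.d. samples from `π`, whose expected squared distance to `π` is the variance
`∑ₐ π(a)(1 - π(a)) / N ≤ 1 / N`, gives `‖F̂_N(π) - F(π)‖ ≤ ε + D / (η² N)` uniformly in `π`. -/

open Finset

section ProductWeights

variable {ι A : Type*} [Fintype ι] [DecidableEq ι] [Fintype A] (π : A → ℝ)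

theorem sum_prod_mul_prod (h : ι → A → ℝ) :
    ∑ v : ι → A, (∏ k, π (v k)) * ∏ k, h k (v k) = ∏ k, ∑ b, π b * h k b := by
  simp_rw [← prod_mul_distrib, Fintype.prod_sum]

theorem sum_prod_eq_one (hπ : ∑ b, π b = 1) : ∑ v : ι → A, ∏ k, π (v k) = 1 := by
  simpa [hπ] using sum_prod_mul_prod (ι := ι) π fun _ _ => 1

variable {π}

theorem sum_prod_mul_apply (hπ : ∑ b, π b = 1) (k : ι) (f : A → ℝ) :
    ∑ v : ι → A, (∏ k', π (v k')) * f (v k) = ∑ b, π b * f b := by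
  calc ∑ v : ι → A, (∏ k', π (v k')) * f (v k)
      = ∏ k', ∑ b, π b * if k' = k then f b else 1 := by
        simpa using sum_prod_mul_prod π fun k' b => if k' = k then f b else 1
    _ = ∏ k', if k' = k then ∑ b, π b * f b else 1 :=
        prod_congr rfl fun k' _ => by split_ifs <;> simp [hπ]
    _ = ∑ b, π b * f b := by simp

theorem sum_prod_mul_apply_mul_apply (hπ : ∑ b, π b = 1) {k l : ι} (hkl : k ≠ l)
    (f g : A → ℝ) :
    ∑ v : ι → A, (∏ k', π (v k')) * (f (v k) * g (v l)) =
      (∑ b, π b * f b) * ∑ b, π b * g b := by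
  calc ∑ v : ι → A, (∏ k', π (v k')) * (f (v k) * g (v l))
      = ∏ k', ∑ b, π b * ((if k' = k then f b else 1) * if k' = l then g b else 1) := by
        have := sum_prod_mul_prod π fun k' b =>
          (if k' = k then f b else 1) * if k' = l then g b else 1
        simpa only [prod_mul_distrib, prod_ite_eq', mem_univ, if_true] using this
    _ = ∏ k', (if k' = k then ∑ b, π b * f b else 1) *
          if k' = l then ∑ b, π b * g b else 1 := by
        refine prod_congr rfl fun k' _ => ?_
        by_cases hk : k' = k
        · subst hk; simp [hkl]
        · by_cases hl : k' = l <;> simp [hk, hl, hπ, hkl.symm]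
    _ = (∑ b, π b * f b) * ∑ b, π b * g b := by
        rw [prod_mul_distrib, prod_ite_eq', prod_ite_eq', if_pos (mem_univ _), if_pos (mem_univ _)]

theorem sum_prod_mul_sq_sum (hπ : ∑ b, π b = 1) {c : A → ℝ} (hc : ∑ b, π b * c b = 0) :
    ∑ v : ι → A, (∏ k, π (v k)) * (∑ k, c (v k)) ^ 2 =
      Fintype.card ι * ∑ b, π b * c b ^ 2 := by
  calc ∑ v : ι → A, (∏ k, π (v k)) * (∑ k, c (v k)) ^ 2
      = ∑ k, ∑ l, ∑ v : ι → A, (∏ k', π (v k')) * (c (v k) * c (v l)) := by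
        simp_rw [sq, sum_mul_sum, mul_sum]
        rw [sum_comm]
        exact sum_congr rfl fun _ _ => sum_comm
    _ = ∑ k : ι, ∑ l : ι, if k = l then ∑ b, π b * c b ^ 2 else 0 := by
        refine sum_congr rfl fun k _ => sum_congr rfl fun l _ => ?_
        split_ifs with hkl
        · subst hkl; simpa [sq] using sum_prod_mul_apply hπ k fun b => c b * c b
        · rw [sum_prod_mul_apply_mul_apply hπ hkl, hc, zero_mul]
    _ = Fintype.card ι * ∑ b, π b * c b ^ 2 := by simp

end ProductWeights

theorem dist_sq_le_sum_sq_sub {A : Type*} [Fintype A] (x y : A → ℝ) :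
    dist x y ^ 2 ≤ ∑ a, (x a - y a) ^ 2 := by
  have h := (PiLp.lipschitzWith_ofLp 2 fun _ : A => ℝ).dist_le_mul (WithLp.toLp 2 x)
    (WithLp.toLp 2 y)
  rw [NNReal.coe_one, one_mul, EuclideanSpace.dist_eq,
    Real.le_sqrt dist_nonneg (by positivity)] at h
  simpa [Real.dist_eq, sq_abs] using h

section Empirical

variable {A : Type} [DecidableEq A] {N : ℕ}

noncomputable def empiricalDist (v : Fin N → A) : A → ℝ :=
  fun a => (N : ℝ)⁻¹ * ∑ k, if v k = a then 1 else 0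

theorem empiricalDist_sub_apply (hN : N ≠ 0) (π : A → ℝ) (v : Fin N → A) (a : A) :
    empiricalDist v a - π a = (N : ℝ)⁻¹ * ∑ k, ((if v k = a then 1 else 0) - π a) := by
  simp [empiricalDist, mul_sub, hN]

variable [Fintype A]

theorem empiricalDist_mem_stdSimplex (hN : N ≠ 0) (v : Fin N → A) :
    empiricalDist v ∈ stdSimplex ℝ A := by
  refine ⟨fun a => by unfold empiricalDist; positivity, ?_⟩
  simp only [empiricalDist, ← mul_sum]
  rw [sum_comm]
  simp [hN]

theorem sum_prod_mul_sq_empiricalDist_sub (hN : N ≠ 0) {π : A → ℝ} (hπ : ∑ b, π b = 1)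
    (a : A) :
    ∑ v : Fin N → A, (∏ k, π (v k)) * (empiricalDist v a - π a) ^ 2 =
      (N : ℝ)⁻¹ * (π a * (1 - π a)) := by
  have hmean : ∑ b, π b * ((if b = a then 1 else 0) - π a) = 0 := by
    simp [mul_sub, ← sum_mul, hπ]
  simp_rw [empiricalDist_sub_apply hN, mul_pow, mul_left_comm _ ((N : ℝ)⁻¹ ^ 2), ← mul_sum,
    sum_prod_mul_sq_sum hπ hmean]
  have hvar : ∑ b, π b * ((if b = a then 1 else 0) - π a) ^ 2 = π a * (1 - π a) := by
    simp only [sub_sq, ite_pow, one_pow, mul_add, mul_sub, sum_add_distrib, sum_sub_distrib]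
    simp [← sum_mul, hπ]
    ring
  rw [hvar, Fintype.card_fin]
  field_simp

theorem sum_prod_mul_dist_empiricalDist_sq_le (hN : N ≠ 0) {π : A → ℝ}
    (hπ : π ∈ stdSimplex ℝ A) :
    ∑ v : Fin N → A, (∏ k, π (v k)) * dist (empiricalDist v) π ^ 2 ≤ (N : ℝ)⁻¹ :=
  calc ∑ v : Fin N → A, (∏ k, π (v k)) * dist (empiricalDist v) π ^ 2
      ≤ ∑ v : Fin N → A, (∏ k, π (v k)) * ∑ a, (empiricalDist v a - π a) ^ 2 :=
        sum_le_sum fun v _ => mul_le_mul_of_nonneg_left (dist_sq_le_sum_sq_sub _ _)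
          (prod_nonneg fun k _ => hπ.1 _)
    _ = ∑ a, (N : ℝ)⁻¹ * (π a * (1 - π a)) := by
        simp_rw [mul_sum]
        rw [sum_comm]
        exact sum_congr rfl fun a _ => sum_prod_mul_sq_empiricalDist_sub hN hπ.2 a
    _ ≤ ∑ a, (N : ℝ)⁻¹ * π a := by
        gcongr with a
        nlinarith [hπ.1 a]
    _ = (N : ℝ)⁻¹ := by rw [← mul_sum, hπ.2, mul_one]

end Empirical

theorem IsCompact.exists_dist_sum_smul_le {X E : Type*} [PseudoMetricSpace X]
    [SeminormedAddCommGroup E] [NormedSpace ℝ E] {K : Set X} (hK : IsCompact K) {f : X → E}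
    (hf : ContinuousOn f K) {ε : ℝ} (hε : 0 < ε) :
    ∃ C, 0 ≤ C ∧ ∀ {ι : Type*} [Fintype ι] (w : ι → ℝ) (x : ι → X) (y : X),
      (∀ i, 0 ≤ w i) → ∑ i, w i = 1 → (∀ i, x i ∈ K) → y ∈ K →
      dist (∑ i, w i • f (x i)) (f y) ≤ ε + C * ∑ i, w i * dist (x i) y ^ 2 := by
  obtain ⟨η, hη, hnear⟩ :=
    Metric.uniformContinuousOn_iff.1 (hK.uniformContinuousOn_of_continuous hf) ε hε
  obtain ⟨D, hD⟩ := Metric.isBounded_iff.1 (hK.image_of_continuousOn hf).isBounded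
  set C := max D 0 / η ^ 2
  have hC : 0 ≤ C := by positivity
  have hclose : ∀ x ∈ K, ∀ y ∈ K, dist (f x) (f y) ≤ ε + C * dist x y ^ 2 := by
    intro x hx y hy
    rcases lt_or_ge (dist x y) η with hxy | hxy
    · have := hnear x hx y hy hxy
      nlinarith [mul_nonneg hC (sq_nonneg (dist x y))]
    · calc dist (f x) (f y) ≤ max D 0 :=
            (hD (Set.mem_image_of_mem f hx) (Set.mem_image_of_mem f hy)).trans (le_max_left _ _)
        _ ≤ C * dist x y ^ 2 := by
            rw [div_mul_eq_mul_div, le_div_iff₀ (by positivity)]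
            gcongr
        _ ≤ ε + C * dist x y ^ 2 := le_add_of_nonneg_left hε.le
  refine ⟨C, hC, fun w x y hw0 hw1 hx hy => ?_⟩
  calc dist (∑ i, w i • f (x i)) (f y) = ‖∑ i, w i • (f (x i) - f y)‖ := by
        simp [dist_eq_norm, smul_sub, ← sum_smul, hw1]
    _ ≤ ∑ i, w i * dist (f (x i)) (f y) := by
        refine (norm_sum_le _ _).trans_eq (sum_congr rfl fun i _ => ?_)
        rw [norm_smul, Real.norm_of_nonneg (hw0 i), dist_eq_norm]
    _ ≤ ∑ i, w i * (ε + C * dist (x i) y ^ 2) :=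
        sum_le_sum fun i _ => mul_le_mul_of_nonneg_left (hclose _ (hx i) y hy) (hw0 i)
    _ = ε + C * ∑ i, w i * dist (x i) y ^ 2 := by
        simp_rw [mul_add, sum_add_distrib, ← sum_mul, hw1, mul_sum, mul_left_comm, one_mul]

theorem stmt9_general {A : Type} [Fintype A] [DecidableEq A]
    (F : (A → ℝ) → A → ℝ)
    (hcont : ContinuousOn F {π : A → ℝ | IsDist π})
    (Fhat : (N : ℕ) → (A → ℝ) → A → ℝ)
    (hFhat : ∀ (N : ℕ) (π : A → ℝ),
      Fhat N π = sampleExp N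
        (fun v => F (fun a => (N : ℝ)⁻¹ * ∑ k : Fin N, if v k = a then 1 else 0)) π) :
    ∀ δ : ℝ, 0 < δ → ∃ M : ℕ, ∀ N : ℕ, M ≤ N → ∀ π : A → ℝ, IsDist π →
      Real.sqrt (∑ a, (Fhat N π a - F π a) ^ 2) ≤ δ := by
  intro δ hδ
  obtain ⟨C, hC0, hC⟩ := (isCompact_stdSimplex ℝ A).exists_dist_sum_smul_le
    ((PiLp.continuous_toLp 2 _).comp_continuousOn hcont) (half_pos hδ)
  have hlim : ∀ᶠ N : ℕ in atTop, N ≠ 0 ∧ C * (N : ℝ)⁻¹ < δ / 2 :=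
    (eventually_ne_atTop 0).and <|
      (tendsto_const_nhds.mul tendsto_inv_atTop_nhds_zero_nat).eventually
        (gt_mem_nhds (by simpa using half_pos hδ))
  obtain ⟨M, hM⟩ := eventually_atTop.1 hlim
  refine ⟨M, fun N hN π hπ => ?_⟩
  obtain ⟨hN0, hCN⟩ := hM N hN
  have hFhat_toLp : WithLp.toLp 2 (Fhat N π) =
      ∑ v : Fin N → A, (∏ k, π (v k)) • WithLp.toLp 2 (F (empiricalDist v)) := by
    simp_rw [hFhat, sampleExp, WithLp.toLp_sum, WithLp.toLp_smul]
    rfl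
  calc √(∑ a, (Fhat N π a - F π a) ^ 2)
      = dist (WithLp.toLp 2 (Fhat N π)) (WithLp.toLp 2 (F π) : EuclideanSpace ℝ A) := by
        simp [EuclideanSpace.dist_eq, Real.dist_eq, sq_abs]
    _ ≤ δ / 2 + C * ∑ v : Fin N → A, (∏ k, π (v k)) * dist (empiricalDist v) π ^ 2 := by
        rw [hFhat_toLp]
        exact hC _ _ _ (fun v => prod_nonneg fun k _ => hπ.1 _) (sum_prod_eq_one π hπ.2)
          (empiricalDist_mem_stdSimplex hN0) hπ
    _ ≤ δ / 2 + C * (N : ℝ)⁻¹ := by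
        gcongr
        exact sum_prod_mul_dist_empiricalDist_sq_le hN0 hπ
    _ ≤ δ := by linarith

/-- Proposition: uniform approximation of a continuous dependence function
by sample-based functions. Let `F : Δ(A) → Δ(A)` be continuous, and let
`g_N(a_1,…,a_N) = F((1/N) Σ_k δ_{a_k})` and `F̂_N(π) = E[g_N(A_1,…,A_N)]` for `A_1,…,A_N`
i.i.d. `π`. Then `F̂_N` converges uniformly to `F` on `Δ(A)` in the Euclidean norm. -/
theorem stmt9 {A : Type} [Fintype A] [DecidableEq A]
    (F : (A → ℝ) → A → ℝ) (hF : ∀ π, IsDist π → IsDist (F π))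
    (hcont : ContinuousOn F {π : A → ℝ | IsDist π})
    (Fhat : (N : ℕ) → (A → ℝ) → A → ℝ)
    (hFhat : ∀ (N : ℕ) (π : A → ℝ),
      Fhat N π = sampleExp N
        (fun v => F (fun a => (N : ℝ)⁻¹ * ∑ k : Fin N, if v k = a then 1 else 0)) π) :
    ∀ δ : ℝ, 0 < δ → ∃ M : ℕ, ∀ N : ℕ, M ≤ N → ∀ π : A → ℝ, IsDist π →
      Real.sqrt (∑ a, (Fhat N π a - F π a) ^ 2) ≤ δ :=
  stmt9_general F hcont Fhat hFhat
end

section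
/- Let θ ∈ (0,1). There exists N₀ ∈ ℕ such that for every N ≥ N₀ the following holds: letting r be the greatest integer with r < (N−1)θ (so r is the unique integer in the interval [(N−1)θ − 1, (N−1)θ)), the binomial probability satisfies C(N−1, r) · θ^r · (1−θ)^{N−1−r} ≥ 1/(2√N). Equivalently, for Y distributed as Binomial(N−1, θ) and b = (1 − 1/N)θ, P(b − 1/N ≤ Y/N < b) ≥ 1/(2√N). -/
/-!
Stirling's bounds `√(2πn) (n/e)ⁿ ≤ n! ≤ e √n (n/e)ⁿ` (the upper one from the monotonicity of the
Stirling sequence) and `4rs ≤ m²` give, for `r, s ≥ 1` and `m = r + s`,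
`C(m, r) pʳ (1-p)ˢ ≥ 2√(2π) / (e² √m) · (mp/r)ʳ (m(1-p)/s)ˢ`.
Since `log x ≥ 1 - 1/x`, the last factor is at least `exp (-(r - mp)² / (mp(1-p)))`.
The largest `r < mθ` has `|r - mθ| ≤ 1`, so once `mθ(1-θ) ≥ 4` this factor is at least `3/4`,
and `e² ≤ 3√(2π)` turns the bound into `1/(2√m)`.
-/

open Real Nat

theorem Stirling.factorial_le_stirling {n : ℕ} (hn : n ≠ 0) :
    (n ! : ℝ) ≤ exp 1 * √n * (n / exp 1) ^ n := by
  have hseq : stirlingSeq n ≤ exp 1 / √2 := by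
    obtain ⟨k, rfl⟩ := Nat.exists_eq_succ_of_ne_zero hn
    simpa [stirlingSeq_one] using stirlingSeq'_antitone (Nat.zero_le k)
  have hpos : 0 < √(2 * n) * (n / exp 1) ^ n := by
    have : (0 : ℝ) < n := by positivity
    positivity
  rw [stirlingSeq, div_le_iff₀ hpos] at hseq
  calc (n ! : ℝ) ≤ exp 1 / √2 * (√(2 * n) * (n / exp 1) ^ n) := hseq
    _ = exp 1 * √n * (n / exp 1) ^ n := by
      rw [sqrt_mul zero_le_two]
      field_simp

theorem Nat.stirling_le_choose_add {r s : ℕ} (hr : r ≠ 0) (hs : s ≠ 0) :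
    √(2 * π * (r + s)) / (exp 1 ^ 2 * √(r * s)) * ((r + s) ^ (r + s) / (r ^ r * s ^ s)) ≤
      ((r + s).choose r : ℝ) := by
  have hr' : (0 : ℝ) < r := by positivity
  have hfact : ((r + s).choose r : ℝ) = (r + s)! / (r ! * s !) := by
    rw [Nat.choose_eq_factorial_div_factorial (Nat.le_add_right r s), Nat.add_sub_cancel_left,
      Nat.cast_div (Nat.factorial_mul_factorial_dvd_factorial_add r s) (by positivity)]
    push_cast
    rfl
  have hnum := Stirling.le_factorial_stirling (r + s)
  have hden : (r ! * s ! : ℝ) ≤ exp 1 * √r * (r / exp 1) ^ r * (exp 1 * √s * (s / exp 1) ^ s) :=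
    mul_le_mul (Stirling.factorial_le_stirling hr) (Stirling.factorial_le_stirling hs)
      (by positivity) (by positivity)
  rw [hfact]
  push_cast at hnum
  calc √(2 * π * (r + s)) / (exp 1 ^ 2 * √(r * s)) * ((r + s) ^ (r + s) / (r ^ r * s ^ s))
      = √(2 * π * (r + s)) * ((r + s) / exp 1) ^ (r + s) /
          (exp 1 * √r * (r / exp 1) ^ r * (exp 1 * √s * (s / exp 1) ^ s)) := by
        rw [sqrt_mul hr'.le, div_pow, div_pow, div_pow, pow_add (exp 1)]
        field_simp
    _ ≤ (r + s)! / (r ! * s !) := div_le_div₀ (by positivity) hnum (by positivity) hden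

theorem exp_sub_sq_div_le_div_pow (n : ℕ) {c : ℝ} (hc : 0 < c) :
    exp (n - n ^ 2 / c) ≤ (c / n) ^ n := by
  rcases Nat.eq_zero_or_pos n with rfl | hn
  · simp
  have hcn : 0 < c / n := by positivity
  have hlog : 1 - n / c ≤ log (c / n) := by
    simpa using one_sub_inv_le_log_of_pos hcn
  calc exp (n - n ^ 2 / c) = exp (1 - n / c) ^ n := by
        rw [← exp_nat_mul]; congr 1; field_simp
    _ ≤ exp (log (c / n)) ^ n := by gcongr
    _ = (c / n) ^ n := by rw [exp_log hcn]

theorem exp_neg_sq_div_le_pow_mul_pow {r s : ℕ} (hrs : r + s ≠ 0) {p : ℝ} (hp0 : 0 < p)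
    (hp1 : p < 1) :
    exp (-((r - (r + s) * p) ^ 2 / ((r + s) * p * (1 - p)))) ≤
      ((r + s) * p / r) ^ r * ((r + s) * (1 - p) / s) ^ s := by
  have hm : (0 : ℝ) < r + s := by exact_mod_cast Nat.pos_of_ne_zero hrs
  have hq : 0 < 1 - p := by linarith
  have hexp : -((r - (r + s) * p) ^ 2 / ((r + s) * p * (1 - p))) =
      (r - r ^ 2 / ((r + s) * p)) + (s - s ^ 2 / ((r + s) * (1 - p))) := by
    field_simp
    ring
  rw [hexp, exp_add]
  gcongr
  · exact exp_sub_sq_div_le_div_pow r (by positivity)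
  · exact exp_sub_sq_div_le_div_pow s (by positivity)

theorem gaussian_le_choose_mul_pow_mul_pow {r s : ℕ} (hr : r ≠ 0) (hs : s ≠ 0) {p : ℝ}
    (hp0 : 0 < p) (hp1 : p < 1) :
    2 * √(2 * π) / (exp 1 ^ 2 * √(r + s)) *
        exp (-((r - (r + s) * p) ^ 2 / ((r + s) * p * (1 - p)))) ≤
      ((r + s).choose r : ℝ) * p ^ r * (1 - p) ^ s := by
  have hq : 0 < 1 - p := by linarith
  have hamgm : 2 * √(r * s) ≤ (r + s : ℝ) := by
    nlinarith [four_mul_le_sq_add (r : ℝ) s, sq_sqrt (by positivity : (0 : ℝ) ≤ r * s),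
      sqrt_nonneg (r * s)]
  have hprefactor : 2 * √(2 * π) / (exp 1 ^ 2 * √(r + s)) ≤
      √(2 * π * (r + s)) / (exp 1 ^ 2 * √(r * s)) := by
    rw [div_le_div_iff₀ (by positivity) (by positivity), sqrt_mul (x := 2 * π) (by positivity)]
    calc 2 * √(2 * π) * (exp 1 ^ 2 * √(r * s)) = √(2 * π) * exp 1 ^ 2 * (2 * √(r * s)) := by
          ring
      _ ≤ √(2 * π) * exp 1 ^ 2 * (r + s) := by gcongr
      _ = √(2 * π) * √(r + s) * (exp 1 ^ 2 * √(r + s)) := by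
        linear_combination (-(√(2 * π) * exp 1 ^ 2)) *
          mul_self_sqrt (by positivity : (0 : ℝ) ≤ r + s)
  calc 2 * √(2 * π) / (exp 1 ^ 2 * √(r + s)) *
        exp (-((r - (r + s) * p) ^ 2 / ((r + s) * p * (1 - p))))
      ≤ √(2 * π * (r + s)) / (exp 1 ^ 2 * √(r * s)) *
          (((r + s) * p / r) ^ r * ((r + s) * (1 - p) / s) ^ s) := by
        gcongr
        exact exp_neg_sq_div_le_pow_mul_pow (by omega) hp0 hp1
    _ = √(2 * π * (r + s)) / (exp 1 ^ 2 * √(r * s)) * ((r + s) ^ (r + s) / (r ^ r * s ^ s)) *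
          (p ^ r * (1 - p) ^ s) := by
        simp only [div_pow, mul_pow, pow_add]
        field_simp
    _ ≤ ((r + s).choose r : ℝ) * (p ^ r * (1 - p) ^ s) :=
        mul_le_mul_of_nonneg_right (Nat.stirling_le_choose_add hr hs) (by positivity)
    _ = ((r + s).choose r : ℝ) * p ^ r * (1 - p) ^ s := (mul_assoc _ _ _).symm

theorem exp_one_sq_le_three_mul_sqrt_two_pi : exp 1 ^ 2 ≤ 3 * √(2 * π) := by
  have he : exp 1 ^ 2 < 2.7182818286 ^ 2 := by
    gcongr
    exact exp_one_lt_d9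
  have hpi : 2.5 ≤ √(2 * π) := by
    rw [le_sqrt (by norm_num) (by positivity)]
    linarith [pi_gt_d2]
  linarith

theorem one_div_two_sqrt_le_choose_mul_pow_mul_pow {r s : ℕ} (hr : r ≠ 0) (hs : s ≠ 0) {p : ℝ}
    (hp0 : 0 < p) (hp1 : p < 1) (hvar : 4 ≤ (r + s) * (p * (1 - p)))
    (hmean : |(r : ℝ) - (r + s) * p| ≤ 1) :
    1 / (2 * √(r + s)) ≤ ((r + s).choose r : ℝ) * p ^ r * (1 - p) ^ s := by
  refine le_trans ?_ (gaussian_le_choose_mul_pow_mul_pow hr hs hp0 hp1)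
  have hexp : 3 / 4 ≤ exp (-((r - (r + s) * p) ^ 2 / ((r + s) * p * (1 - p)))) := by
    have : (r - (r + s) * p) ^ 2 / ((r + s) * p * (1 - p)) ≤ 1 / 4 := by
      rw [div_le_iff₀ (by nlinarith), ← sq_abs]
      nlinarith [abs_nonneg ((r : ℝ) - (r + s) * p)]
    linarith [add_one_le_exp (-((r - (r + s) * p) ^ 2 / ((r + s) * p * (1 - p))))]
  have hsqrt : 0 < √((r : ℝ) + s) := sqrt_pos.2 (by positivity)
  calc 1 / (2 * √(r + s)) ≤ 2 * √(2 * π) / (exp 1 ^ 2 * √(r + s)) * (3 / 4) := by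
        rw [div_mul_eq_mul_div, div_le_div_iff₀ (by positivity) (by positivity)]
        nlinarith [exp_one_sq_le_three_mul_sqrt_two_pi]
    _ ≤ _ := by gcongr

/-- Lemma: central binomial probabilities are not too small.
Let `θ ∈ (0,1)`. For all sufficiently large `N`, letting `r` be the greatest integer with
`r < (N−1)θ`, we have `C(N−1, r) θ^r (1−θ)^{N−1−r} ≥ 1/(2√N)`. -/
theorem stmt18 (θ : ℝ) (hθ0 : 0 < θ) (hθ1 : θ < 1) :
    ∃ N₀ : ℕ, ∀ N : ℕ, N₀ ≤ N → ∀ r : ℕ,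
      ((r : ℝ) < ((N : ℝ) - 1) * θ) →
      (∀ r' : ℕ, ((r' : ℝ) < ((N : ℝ) - 1) * θ) → r' ≤ r) →
      1 / (2 * Real.sqrt N) ≤
        (Nat.choose (N - 1) r : ℝ) * θ ^ r * (1 - θ) ^ (N - 1 - r) := by
  have hvar : 0 < θ * (1 - θ) := mul_pos hθ0 (by linarith)
  refine ⟨⌈4 / (θ * (1 - θ))⌉₊ + 1, fun N hN r hr hmax => ?_⟩
  obtain ⟨m, rfl⟩ : ∃ m, N = m + 1 := ⟨N - 1, by omega⟩
  simp only [Nat.add_sub_cancel, Nat.cast_add, Nat.cast_one, add_sub_cancel_right] at hr hmax ⊢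
  have hm : 4 ≤ m * (θ * (1 - θ)) := by
    rw [← div_le_iff₀ hvar]
    exact (Nat.le_ceil _).trans (by exact_mod_cast (by omega : ⌈4 / (θ * (1 - θ))⌉₊ ≤ m))
  have hr_ge : m * θ - 1 ≤ r := by
    by_contra! h
    have := hmax (r + 1) (by push_cast; linarith)
    omega
  obtain ⟨s, rfl⟩ : ∃ s, m = r + s :=
    Nat.exists_eq_add_of_le (by exact_mod_cast (show (r : ℝ) ≤ m by nlinarith))
  have hr0 : r ≠ 0 := by rintro rfl; push_cast at *; nlinarith
  have hs0 : s ≠ 0 := by rintro rfl; push_cast at *; nlinarith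
  push_cast at hr hr_ge hm ⊢
  rw [Nat.add_sub_cancel_left]
  calc 1 / (2 * √(r + s + 1)) ≤ 1 / (2 * √(r + s)) := by
        gcongr 1 / (2 * √?_)
        linarith
    _ ≤ _ := one_div_two_sqrt_le_choose_mul_pow_mul_pow hr0 hs0 hθ0 hθ1 hm
        (abs_le.2 ⟨by linarith, by linarith⟩)
end
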